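/- arXiv:1901.07215 — 9 statements merged into one kernel-verified Lean document; each statement's English description precedes it below -/
import Mathlib

section
/- Let C ≥ 0, R > 0 and m ∈ ℝ, and let (f_k)_{k≥0} be a sequence of complex numbers with |f_k| ≤ C·R^k·k!/(k+1)^m for all k. Then there exists C' ≥ 0 such that for every integer N ≥ 1 one has |∑_{k=0}^{⌊eN/(3R)⌋} N^{-k}·f_k| ≤ C'. -/
/-!
Since `k! ≤ k^k`, every index `k ≤ eN/(3R)` satisfies `R^k k!/N^k ≤ (Rk/N)^k ≤ (e/3)^k`, and
`(k+1)^(-m) ≤ (k+1)^⌈|m|⌉`. So each term is bounded, uniformly in `N`, by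
`C (k+1)^⌈|m|⌉ (e/3)^k`, a summable sequence because `e/3 < 1`.
-/

open Nat Finset

lemma summable_add_one_pow_mul_geometric (n : ℕ) {r : ℝ} (hr₀ : 0 ≤ r) (hr₁ : r < 1) :
    Summable fun k : ℕ => ((k : ℝ) + 1) ^ n * r ^ k := by
  refine (summable_descFactorial_mul_geometric_of_norm_lt_one n (r := r) ?_).of_nonneg_of_le
    (fun k => by positivity) fun k => ?_
  · rwa [Real.norm_of_nonneg hr₀]
  · gcongr
    -- `(k+1)^n ≤ (k+1)(k+2)⋯(k+n)`
    have h := Nat.pow_sub_le_descFactorial (k + n) n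
    rw [show k + n + 1 - n = k + 1 by omega] at h
    exact_mod_cast h

lemma inv_rpow_le_pow_ceil_abs {x : ℝ} (hx : 1 ≤ x) (m : ℝ) : (x ^ m)⁻¹ ≤ x ^ ⌈|m|⌉₊ := by
  rw [← Real.rpow_neg (by linarith), ← Real.rpow_natCast]
  exact Real.rpow_le_rpow_of_exponent_le hx ((neg_le_abs m).trans (Nat.le_ceil _))

lemma pow_mul_factorial_div_pow_le {R r N : ℝ} {k : ℕ} (hR : 0 ≤ R) (hN : 0 < N)
    (hk : R * k ≤ r * N) : R ^ k * k ! / N ^ k ≤ r ^ k :=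
  calc R ^ k * k ! / N ^ k ≤ R ^ k * (k : ℝ) ^ k / N ^ k := by
        gcongr; exact_mod_cast Nat.factorial_le_pow k
    _ = (R * k / N) ^ k := by rw [← mul_pow, div_pow]
    _ ≤ r ^ k := by gcongr; rwa [div_le_iff₀ hN]

lemma mul_le_of_le_floor_div {R x : ℝ} {k : ℕ} (hR : 0 < R) (hx : 0 ≤ x)
    (hk : k ≤ ⌊x / R⌋₊) : R * k ≤ x := by
  rw [Nat.le_floor_iff (by positivity), le_div_iff₀ hR] at hk
  linarith

lemma norm_inv_pow_mul_le {C R r m : ℝ} {N k : ℕ} {z : ℂ} (hC : 0 ≤ C) (hR : 0 ≤ R)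
    (hN : 0 < N) (hk : R * k ≤ r * N) (hz : ‖z‖ ≤ C * R ^ k * k ! / ((k : ℝ) + 1) ^ m) :
    ‖(N : ℂ)⁻¹ ^ k * z‖ ≤ C * (((k : ℝ) + 1) ^ ⌈|m|⌉₊ * r ^ k) := by
  have hN' : (0 : ℝ) < N := by exact_mod_cast hN
  have hr : 0 ≤ r :=
    (mul_nonneg_iff_of_pos_right hN').1 ((by positivity : (0 : ℝ) ≤ R * k).trans hk)
  have hgeom := pow_mul_factorial_div_pow_le hR hN' hk
  have hpoly := inv_rpow_le_pow_ceil_abs (le_add_of_nonneg_left k.cast_nonneg) m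
  calc ‖(N : ℂ)⁻¹ ^ k * z‖ = ‖z‖ / (N : ℝ) ^ k := by
        rw [norm_mul, norm_pow, norm_inv, Complex.norm_natCast, inv_pow, inv_mul_eq_div]
    _ ≤ C * R ^ k * k ! / ((k : ℝ) + 1) ^ m / (N : ℝ) ^ k := by gcongr
    _ = C * (R ^ k * k ! / (N : ℝ) ^ k) * (((k : ℝ) + 1) ^ m)⁻¹ := by ring
    _ ≤ C * r ^ k * ((k : ℝ) + 1) ^ ⌈|m|⌉₊ := by gcongr
    _ = C * (((k : ℝ) + 1) ^ ⌈|m|⌉₊ * r ^ k) := by ring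

/-- Summation of an analytic symbol sequence: the partial sums up to `⌊eN/(3R)⌋`
are uniformly bounded in `N`. -/
theorem analytic_symbol_summation
    (C R m : ℝ) (hC : 0 ≤ C) (hR : 0 < R) (f : ℕ → ℂ)
    (hf : ∀ k : ℕ, ‖f k‖ ≤ C * R ^ k * (Nat.factorial k) / ((k : ℝ) + 1) ^ m) :
    ∃ C' : ℝ, 0 ≤ C' ∧ ∀ N : ℕ, 1 ≤ N →
      ‖∑ k ∈ Finset.range (⌊Real.exp 1 * N / (3 * R)⌋₊ + 1),
        ((N : ℂ))⁻¹ ^ k * f k‖ ≤ C' := by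
  set r := Real.exp 1 / 3
  have hr₀ : 0 ≤ r := by positivity
  have hr₁ : r < 1 := by rw [div_lt_one three_pos]; exact Real.exp_one_lt_three
  have hsum := (summable_add_one_pow_mul_geometric ⌈|m|⌉₊ hr₀ hr₁).mul_left C
  refine ⟨∑' k : ℕ, C * (((k : ℝ) + 1) ^ ⌈|m|⌉₊ * r ^ k), tsum_nonneg fun k => by positivity,
    fun N hN => ?_⟩
  calc _ ≤ ∑ k ∈ range (⌊Real.exp 1 * N / (3 * R)⌋₊ + 1),
          C * (((k : ℝ) + 1) ^ ⌈|m|⌉₊ * r ^ k) := by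
        refine norm_sum_le_of_le _ fun k hk => norm_inv_pow_mul_le hC hR.le hN ?_ (hf k)
        rw [mem_range, Nat.lt_succ_iff, show Real.exp 1 * N / (3 * R) = r * N / R by ring] at hk
        exact mul_le_of_le_floor_div hR (by positivity) hk
    _ ≤ _ := hsum.sum_le_tsum _ fun k _ => by positivity
end

section
/- There exists a universal constant C₀ ≥ 0 with the following property. Let n ≥ 1, let U ⊆ ℝⁿ be open, let m ≥ 4 be real, let r, R > 0 and C_a, C_b ≥ 0, and let (a_k)_{k≥0} and (b_k)_{k≥0} be sequences of smooth functions U → ℂ such that for all j, k ≥ 0 and all x ∈ U one has ‖iteratedFDeriv ℝ j a_k x‖ ≤ C_a·r^j·R^k·(j+k)!/(j+k+1)^m and ‖iteratedFDeriv ℝ j b_k x‖ ≤ C_b·r^j·R^k·(j+k)!/(j+k+1)^m. Then the Cauchy product (a*b)_k = ∑_{i=0}^k a_i·b_{k-i} satisfies, for all j, k ≥ 0 and all x ∈ U, ‖iteratedFDeriv ℝ j (a*b)_k x‖ ≤ C₀·C_a·C_b·r^j·R^k·(j+k)!/(j+k+1)^m. -/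
open Finset

section CauchyProductAux
variable {j k l i : ℕ}


lemma aux_sum_inv_sq (T : ℕ) :
    ∑ t ∈ Finset.range T, (1:ℝ)/((t:ℝ)+1)^2 ≤ 2 := by
  have key : ∀ T : ℕ, ∑ t ∈ Finset.range T, (1:ℝ)/((t:ℝ)+1)^2 ≤ 2 - 1/(T:ℝ) := by
    intro T
    induction T with
    | zero => simp
    | succ s ih =>
      rcases Nat.eq_zero_or_pos s with hs | hs
      · subst hs; norm_num
      · rw [Finset.sum_range_succ]
        have hu : (1:ℝ) ≤ (s:ℝ) := by exact_mod_cast hs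
        have h1 : (1:ℝ)/((s:ℝ)+1)^2 ≤ 1/((s:ℝ)*((s:ℝ)+1)) := by
          apply one_div_le_one_div_of_le
          · positivity
          · nlinarith
        have h2 : (1:ℝ)/((s:ℝ)*((s:ℝ)+1)) = 1/(s:ℝ) - 1/((s:ℝ)+1) := by
          field_simp
          ring
        push_cast
        linarith
  have h := key T
  have : (0:ℝ) ≤ 1/(T:ℝ) := by positivity
  linarith

lemma choose_fact_le {j k l i : ℕ} (hl : l ≤ j) (hi : i ≤ k) :
    j.choose l * ((l+i).factorial * ((j-l)+(k-i)).factorial) ≤ (j+k).factorial := by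
  have h1 : j.choose l * k.choose i ≤ (j+k).choose (l+i) := by
    rw [Nat.add_choose_eq]
    exact Finset.single_le_sum (f := fun p : ℕ × ℕ => j.choose p.1 * k.choose p.2)
      (fun _ _ => Nat.zero_le _) (a := ((l,i) : ℕ × ℕ)) (Finset.HasAntidiagonal.mem_antidiagonal.2 rfl)
  have h2 : j.choose l ≤ (j+k).choose (l+i) :=
    le_trans (Nat.le_mul_of_pos_right _ (Nat.choose_pos hi)) h1
  have h3 : (j-l)+(k-i) = (j+k) - (l+i) := by omega
  have h4 : l + i ≤ j + k := by omega
  calc j.choose l * ((l+i).factorial * ((j-l)+(k-i)).factorial)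
      ≤ (j+k).choose (l+i) * ((l+i).factorial * ((j+k)-(l+i)).factorial) := by
        rw [h3]; exact Nat.mul_le_mul_right _ h2
    _ = (j+k).factorial := by
        rw [← mul_assoc]; exact Nat.choose_mul_factorial_mul_factorial h4

lemma key_half (m : ℝ) (hm : 4 ≤ m) {F G Nr p q : ℝ} (hF1 : 1 ≤ F) (hG1 : 1 ≤ G)
    (hsum : F + G = Nr + 1) (hFG : F ≤ G) (hp : 1 ≤ p) (hq : 1 ≤ q)
    (hpF : p ≤ F) (hqF : q ≤ F) :
    1/(F^m * G^m) ≤ 16/Nr^m * (1/(p^2 * q^2)) := by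
  have hNr : (1:ℝ) ≤ Nr := by linarith
  have hNrpos : (0:ℝ) < Nr := by linarith
  have hFpos : (0:ℝ) < F := by linarith
  have hGpos : (0:ℝ) < G := by linarith
  have hFGe : Nr ≤ F*G := by nlinarith
  have hG2 : Nr/2 ≤ G := by linarith
  have hp2 : p^2 ≤ F^2 := by nlinarith
  have hq2 : q^2 ≤ F^2 := by nlinarith
  have hF4 : p^2*q^2 ≤ F^4 := by nlinarith [sq_nonneg p, sq_nonneg q]
  have hG4 : Nr^4/16 ≤ G^4 := by nlinarith [pow_le_pow_left₀ (by positivity : (0:ℝ) ≤ Nr/2) hG2 4]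
  have hAB : Nr^(m-4) ≤ (F*G)^(m-4) :=
    Real.rpow_le_rpow (le_of_lt hNrpos) hFGe (by linarith)
  have hFGm : F^m * G^m = (F*G)^(m-4) * ((F*G)^4) := by
    rw [← Real.mul_rpow hFpos.le hGpos.le]
    rw [← Real.rpow_natCast (F*G) 4, ← Real.rpow_add (by positivity)]
    norm_num
  have hNrm : Nr^m = Nr^(m-4) * (Nr^4 : ℝ) := by
    rw [← Real.rpow_natCast Nr 4, ← Real.rpow_add hNrpos]
    norm_num
  have hApos : (0:ℝ) < Nr^(m-4) := Real.rpow_pos_of_pos hNrpos _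
  have hmain : Nr^m * (p^2*q^2) ≤ 16 * (F^m * G^m) := by
    rw [hNrm, hFGm]
    have step1 : Nr^(m-4) * (Nr^4:ℝ) * (p^2*q^2) ≤ (F*G)^(m-4) * (16*G^4) * F^4 := by
      apply mul_le_mul _ hF4 (by positivity) (by positivity)
      apply mul_le_mul hAB (by linarith) (by positivity) (by positivity)
    calc Nr^(m-4) * (Nr^4:ℝ) * (p^2*q^2) ≤ (F*G)^(m-4) * (16*G^4) * F^4 := step1
      _ = 16 * ((F*G)^(m-4) * (F*G)^4) := by ring
  have hpq : (0:ℝ) < p^2*q^2 := by positivity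
  have hFGmpos : (0:ℝ) < F^m * G^m := by
    have := Real.rpow_pos_of_pos hFpos m
    have := Real.rpow_pos_of_pos hGpos m
    positivity
  have hNrmpos : (0:ℝ) < Nr^m := Real.rpow_pos_of_pos hNrpos _
  rw [div_mul_div_comm, div_le_div_iff₀ hFGmpos (by positivity)]
  nlinarith [hmain]

lemma key_ineq (m : ℝ) (hm : 4 ≤ m) (hl : l ≤ j) (hi : i ≤ k) :
    1 / ((((l:ℝ)+(i:ℝ)+1)^m) * (((j:ℝ)-(l:ℝ)+((k:ℝ)-(i:ℝ))+1)^m)) ≤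
    16 / (((j:ℝ)+(k:ℝ)+1)^m) *
      ((1/(((l:ℝ)+1)^2)) * (1/(((i:ℝ)+1)^2)) +
        (1/(((j:ℝ)-(l:ℝ)+1)^2)) * (1/(((k:ℝ)-(i:ℝ)+1)^2))) := by
  have hl' : (l:ℝ) ≤ (j:ℝ) := by exact_mod_cast hl
  have hi' : (i:ℝ) ≤ (k:ℝ) := by exact_mod_cast hi
  set F : ℝ := (l:ℝ)+(i:ℝ)+1 with hF
  set G : ℝ := (j:ℝ)-(l:ℝ)+((k:ℝ)-(i:ℝ))+1 with hG
  set Nr : ℝ := (j:ℝ)+(k:ℝ)+1 with hNr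
  have hF1 : 1 ≤ F := by
    rw [hF]
    have h1 := Nat.cast_nonneg (α := ℝ) l
    have h2 := Nat.cast_nonneg (α := ℝ) i
    linarith
  have hG1 : 1 ≤ G := by rw [hG]; nlinarith
  have hsum : F + G = Nr + 1 := by rw [hF, hG, hNr]; ring
  have hNrm : (0:ℝ) ≤ 16/Nr^m := by
    have : (0:ℝ) < Nr := by positivity
    have := Real.rpow_pos_of_pos this m
    positivity
  rcases le_total F G with hFG | hFG
  · have h := key_half m hm hF1 hG1 hsum hFG
      (p := (l:ℝ)+1) (q := (i:ℝ)+1) (by linarith [Nat.cast_nonneg (α := ℝ) l])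
      (by linarith [Nat.cast_nonneg (α := ℝ) i])
      (by rw [hF]; linarith [Nat.cast_nonneg (α := ℝ) i])
      (by rw [hF]; linarith [Nat.cast_nonneg (α := ℝ) l])
    have e : (1:ℝ)/(((l:ℝ)+1)^2 * ((i:ℝ)+1)^2)
        = (1/(((l:ℝ)+1)^2)) * (1/(((i:ℝ)+1)^2)) := by
      rw [div_mul_div_comm, mul_one]
    rw [e] at h
    refine h.trans ?_
    have h2 : (0:ℝ) ≤ (1/(((j:ℝ)-(l:ℝ)+1)^2)) * (1/(((k:ℝ)-(i:ℝ)+1)^2)) := by positivity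
    exact mul_le_mul_of_nonneg_left (by linarith) hNrm
  · have h := key_half m hm (Nr := Nr) hG1 hF1 (by linarith) hFG
      (p := (j:ℝ)-(l:ℝ)+1) (q := (k:ℝ)-(i:ℝ)+1) (by linarith)
      (by linarith)
      (by rw [hG]; linarith)
      (by rw [hG]; linarith)
    have e : (1:ℝ)/(((j:ℝ)-(l:ℝ)+1)^2 * ((k:ℝ)-(i:ℝ)+1)^2)
        = (1/(((j:ℝ)-(l:ℝ)+1)^2)) * (1/(((k:ℝ)-(i:ℝ)+1)^2)) := by
      rw [div_mul_div_comm, mul_one]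
    rw [e, mul_comm (G^m) (F^m)] at h
    refine h.trans ?_
    have h2 : (0:ℝ) ≤ (1/(((l:ℝ)+1)^2)) * (1/(((i:ℝ)+1)^2)) := by positivity
    exact mul_le_mul_of_nonneg_left (by linarith) hNrm


lemma term_bound {m r R Ca Cb : ℝ} (hm : 4 ≤ m) (hr : 0 < r) (hR : 0 < R)
    (hCa : 0 ≤ Ca) (hCb : 0 ≤ Cb) (hl : l ≤ j) (hi : i ≤ k)
    {y z : ℝ} (hy0 : 0 ≤ y) (hz0 : 0 ≤ z)
    (hy : y ≤ Ca * r^l * R^i * ((l+i).factorial : ℝ) / (((l:ℝ)+(i:ℝ)+1)^m))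
    (hz : z ≤ Cb * r^(j-l) * R^(k-i) * (((j-l)+(k-i)).factorial : ℝ) /
      (((j-l : ℕ):ℝ)+((k-i : ℕ):ℝ)+1)^m) :
    (j.choose l : ℝ) * y * z ≤
      Ca*Cb*r^j*R^k*((j+k).factorial : ℝ) *
        (16 / (((j:ℝ)+(k:ℝ)+1)^m) *
          ((1/(((l:ℝ)+1)^2)) * (1/(((i:ℝ)+1)^2)) +
            (1/(((j:ℝ)-(l:ℝ)+1)^2)) * (1/(((k:ℝ)-(i:ℝ)+1)^2)))) := by
  have hcast1 : ((j-l : ℕ):ℝ) = (j:ℝ)-(l:ℝ) := by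
    push_cast [Nat.cast_sub hl]; ring
  have hcast2 : ((k-i : ℕ):ℝ) = (k:ℝ)-(i:ℝ) := by
    push_cast [Nat.cast_sub hi]; ring
  rw [hcast1, hcast2] at hz
  set F : ℝ := (l:ℝ)+(i:ℝ)+1 with hF
  set G : ℝ := (j:ℝ)-(l:ℝ)+((k:ℝ)-(i:ℝ))+1 with hG
  have hl' : (l:ℝ) ≤ (j:ℝ) := by exact_mod_cast hl
  have hi' : (i:ℝ) ≤ (k:ℝ) := by exact_mod_cast hi
  have hFpos : (0:ℝ) < F := by positivity
  have hGpos : (0:ℝ) < G := by rw [hG]; nlinarith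
  have hFm : (0:ℝ) < F^m := Real.rpow_pos_of_pos hFpos m
  have hGm : (0:ℝ) < G^m := Real.rpow_pos_of_pos hGpos m
  have step1 : (j.choose l : ℝ) * y * z ≤
      (j.choose l : ℝ) * (Ca * r^l * R^i * ((l+i).factorial : ℝ) / F^m)
        * (Cb * r^(j-l) * R^(k-i) * (((j-l)+(k-i)).factorial : ℝ) / G^m) := by
    have hA0 : (0:ℝ) ≤ Ca * r^l * R^i * ((l+i).factorial : ℝ) / F^m := by positivity
    apply mul_le_mul _ hz hz0 (by positivity)
    exact mul_le_mul le_rfl hy hy0 (by positivity)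
  have e1 : (j.choose l : ℝ) * (Ca * r^l * R^i * ((l+i).factorial : ℝ) / F^m)
        * (Cb * r^(j-l) * R^(k-i) * (((j-l)+(k-i)).factorial : ℝ) / G^m)
      = (Ca*Cb*(r^l*r^(j-l))*(R^i*R^(k-i))) *
          (((j.choose l : ℝ) * (((l+i).factorial : ℝ) * (((j-l)+(k-i)).factorial : ℝ)))
            * (1/(F^m * G^m))) := by
    field_simp
  have e2 : r^l*r^(j-l) = r^j := by rw [← pow_add]; congr 1; omega
  have e3 : R^i*R^(k-i) = R^k := by rw [← pow_add]; congr 1; omega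
  have hcf : ((j.choose l : ℝ) * (((l+i).factorial : ℝ) * (((j-l)+(k-i)).factorial : ℝ)))
      ≤ ((j+k).factorial : ℝ) := by exact_mod_cast choose_fact_le hl hi
  have hkey := key_ineq m hm hl hi
  rw [← hF, ← hG] at hkey
  have h0 : (0:ℝ) ≤ Ca*Cb*r^j*R^k := by positivity
  have hK0 : (0:ℝ) ≤ 1/(F^m * G^m) := by positivity
  refine step1.trans ?_
  rw [e1, e2, e3]
  calc Ca*Cb*r^j*R^k *
        (((j.choose l : ℝ) * (((l+i).factorial : ℝ) * (((j-l)+(k-i)).factorial : ℝ)))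
          * (1/(F^m * G^m)))
      ≤ Ca*Cb*r^j*R^k * (((j+k).factorial : ℝ) *
          (16 / (((j:ℝ)+(k:ℝ)+1)^m) *
            ((1/(((l:ℝ)+1)^2)) * (1/(((i:ℝ)+1)^2)) +
              (1/(((j:ℝ)-(l:ℝ)+1)^2)) * (1/(((k:ℝ)-(i:ℝ)+1)^2))))) := by
        exact mul_le_mul_of_nonneg_left (mul_le_mul hcf hkey hK0 (Nat.cast_nonneg _)) h0
    _ = Ca*Cb*r^j*R^k*((j+k).factorial : ℝ) *
          (16 / (((j:ℝ)+(k:ℝ)+1)^m) *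
            ((1/(((l:ℝ)+1)^2)) * (1/(((i:ℝ)+1)^2)) +
              (1/(((j:ℝ)-(l:ℝ)+1)^2)) * (1/(((k:ℝ)-(i:ℝ)+1)^2)))) := by ring

lemma reflect_sum (j : ℕ) :
    ∑ l ∈ Finset.range (j+1), (1:ℝ)/((j:ℝ)-(l:ℝ)+1)^2
      = ∑ l ∈ Finset.range (j+1), (1:ℝ)/((l:ℝ)+1)^2 := by
  rw [← Finset.sum_range_reflect (fun l => (1:ℝ)/((l:ℝ)+1)^2) (j+1)]
  refine Finset.sum_congr rfl fun l hl => ?_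
  have hlj : l ≤ j := by simpa [Nat.lt_succ_iff] using hl
  have : ((j + 1 - 1 - l : ℕ) : ℝ) = (j:ℝ) - (l:ℝ) := by
    rw [Nat.add_sub_cancel, Nat.cast_sub hlj]
  rw [this]

end CauchyProductAux

/-- The Cauchy product of two analytic symbols of functions is an analytic symbol of the
same class, up to a universal constant. -/
theorem cauchy_product_of_analytic_symbols :
    ∃ C₀ : ℝ, 0 ≤ C₀ ∧
      ∀ (n : ℕ), 1 ≤ n → ∀ (U : Set (Fin n → ℝ)), IsOpen U →
      ∀ (m : ℝ), 4 ≤ m → ∀ (r R : ℝ), 0 < r → 0 < R →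
      ∀ (Ca Cb : ℝ), 0 ≤ Ca → 0 ≤ Cb →
      ∀ (a b : ℕ → (Fin n → ℝ) → ℂ),
        (∀ k, ContDiff ℝ (⊤ : ℕ∞) (a k)) → (∀ k, ContDiff ℝ (⊤ : ℕ∞) (b k)) →
        (∀ (j k : ℕ), ∀ x ∈ U, ‖iteratedFDeriv ℝ j (a k) x‖ ≤
          Ca * r ^ j * R ^ k * (Nat.factorial (j + k)) / ((j : ℝ) + k + 1) ^ m) →
        (∀ (j k : ℕ), ∀ x ∈ U, ‖iteratedFDeriv ℝ j (b k) x‖ ≤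
          Cb * r ^ j * R ^ k * (Nat.factorial (j + k)) / ((j : ℝ) + k + 1) ^ m) →
        ∀ (j k : ℕ), ∀ x ∈ U,
          ‖iteratedFDeriv ℝ j (fun y => ∑ i ∈ Finset.range (k + 1), a i y * b (k - i) y) x‖ ≤
            C₀ * Ca * Cb * r ^ j * R ^ k * (Nat.factorial (j + k)) / ((j : ℝ) + k + 1) ^ m := by
  refine ⟨128, by norm_num, ?_⟩
  intro n hn U hU m hm r R hr hR Ca Cb hCa hCb a b ha hb hA hB j k x hx
  have hNrpos : (0:ℝ) < ((j:ℝ)+(k:ℝ)+1) := by positivity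
  have hNrm : (0:ℝ) < ((j:ℝ)+(k:ℝ)+1)^m := Real.rpow_pos_of_pos hNrpos m
  -- Step 1: derivative of the sum
  have hsum_eq : iteratedFDeriv ℝ j
      (fun y => ∑ i ∈ Finset.range (k + 1), a i y * b (k - i) y) x
      = ∑ i ∈ Finset.range (k+1),
          iteratedFDeriv ℝ j (fun y => a i y * b (k-i) y) x := by
    have := iteratedFDeriv_sum (𝕜 := ℝ) (f := fun i y => a i y * b (k-i) y)
      (u := Finset.range (k+1)) (i := j)
      (fun p _ => ((ha p).mul (hb (k-p))).of_le (by exact_mod_cast le_top))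
    have h2 := congrFun this x
    simp only [Finset.sum_apply] at h2
    exact h2
  rw [hsum_eq]
  -- Step 2: triangle inequality and Leibniz
  have step2 : ‖∑ i ∈ Finset.range (k+1),
        iteratedFDeriv ℝ j (fun y => a i y * b (k-i) y) x‖
      ≤ ∑ i ∈ Finset.range (k+1), ∑ l ∈ Finset.range (j+1),
          (j.choose l : ℝ) * ‖iteratedFDeriv ℝ l (a i) x‖
            * ‖iteratedFDeriv ℝ (j-l) (b (k-i)) x‖ := by
    refine (norm_sum_le _ _).trans (Finset.sum_le_sum fun i _ => ?_)
    exact norm_iteratedFDeriv_mul_le (ha i) (hb (k-i)) x (by exact_mod_cast le_top)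
  refine step2.trans ?_
  -- Step 3: bound each term
  have step3 : ∀ i ∈ Finset.range (k+1), ∀ l ∈ Finset.range (j+1),
      (j.choose l : ℝ) * ‖iteratedFDeriv ℝ l (a i) x‖
        * ‖iteratedFDeriv ℝ (j-l) (b (k-i)) x‖
      ≤ Ca*Cb*r^j*R^k*((j+k).factorial : ℝ) *
          (16 / (((j:ℝ)+(k:ℝ)+1)^m) *
            ((1/(((l:ℝ)+1)^2)) * (1/(((i:ℝ)+1)^2)) +
              (1/(((j:ℝ)-(l:ℝ)+1)^2)) * (1/(((k:ℝ)-(i:ℝ)+1)^2)))) := by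
    intro i hi l hl
    rw [Finset.mem_range, Nat.lt_succ_iff] at hi hl
    have hki : k - i + i = k := by omega
    have hzb := hB (j-l) (k-i) x hx
    exact term_bound hm hr hR hCa hCb hl hi (norm_nonneg _) (norm_nonneg _)
      (by have := hA l i x hx; push_cast at this ⊢; convert this using 3)
      (by have := hzb; push_cast at this ⊢; convert this using 3)
  refine (Finset.sum_le_sum fun i hi => Finset.sum_le_sum fun l hl => step3 i hi l hl).trans ?_
  -- Step 4: evaluate the double sum
  set D : ℝ := Ca*Cb*r^j*R^k*((j+k).factorial : ℝ) with hD
  have hD0 : 0 ≤ D := by rw [hD]; positivity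
  have hsum4 : ∑ i ∈ Finset.range (k+1), ∑ l ∈ Finset.range (j+1),
      D * (16 / (((j:ℝ)+(k:ℝ)+1)^m) *
        ((1/(((l:ℝ)+1)^2)) * (1/(((i:ℝ)+1)^2)) +
          (1/(((j:ℝ)-(l:ℝ)+1)^2)) * (1/(((k:ℝ)-(i:ℝ)+1)^2))))
      ≤ D * (16 / (((j:ℝ)+(k:ℝ)+1)^m) * 8) := by
    simp only [← Finset.mul_sum]
    apply mul_le_mul_of_nonneg_left _ hD0
    apply mul_le_mul_of_nonneg_left _ (by positivity)
    have expand : ∑ l ∈ Finset.range (j+1), ∑ i ∈ Finset.range (k+1),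
        ((1/(((l:ℝ)+1)^2)) * (1/(((i:ℝ)+1)^2)) +
          (1/(((j:ℝ)-(l:ℝ)+1)^2)) * (1/(((k:ℝ)-(i:ℝ)+1)^2)))
        = (∑ l ∈ Finset.range (j+1), (1:ℝ)/((l:ℝ)+1)^2)
            * (∑ i ∈ Finset.range (k+1), (1:ℝ)/((i:ℝ)+1)^2)
          + (∑ l ∈ Finset.range (j+1), (1:ℝ)/((j:ℝ)-(l:ℝ)+1)^2)
            * (∑ i ∈ Finset.range (k+1), (1:ℝ)/((k:ℝ)-(i:ℝ)+1)^2) := by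
      rw [Finset.sum_mul_sum, Finset.sum_mul_sum, ← Finset.sum_add_distrib]
      refine Finset.sum_congr rfl fun l _ => ?_
      rw [← Finset.sum_add_distrib]
    rw [Finset.sum_comm, expand, reflect_sum j, reflect_sum k]
    have s1 := aux_sum_inv_sq (j+1)
    have s2 := aux_sum_inv_sq (k+1)
    have p1 : (0:ℝ) ≤ ∑ l ∈ Finset.range (j+1), (1:ℝ)/((l:ℝ)+1)^2 :=
      Finset.sum_nonneg fun _ _ => by positivity
    have p2 : (0:ℝ) ≤ ∑ i ∈ Finset.range (k+1), (1:ℝ)/((i:ℝ)+1)^2 :=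
      Finset.sum_nonneg fun _ _ => by positivity
    nlinarith
  refine hsum4.trans (le_of_eq ?_)
  rw [hD]
  ring
end

section
/- Let C_a, C_b ≥ 0, R > 0 and m ∈ ℝ, and let (a_k)_{k≥0}, (b_k)_{k≥0} be sequences of complex numbers with |a_k| ≤ C_a·R^k·k!/(k+1)^m and |b_k| ≤ C_b·R^k·k!/(k+1)^m for all k. Then there exist c > 0, c' > 0 and C ≥ 0 such that for every integer N ≥ 1 one has |∑_{k=0}^{⌊cN⌋} N^{-k}·(∑_{i=0}^k a_i·b_{k-i}) − (∑_{k=0}^{⌊cN⌋} N^{-k}·a_k)·(∑_{k=0}^{⌊cN⌋} N^{-k}·b_k)| ≤ C·exp(-c'·N). -/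
/-! With `x = 1/N` and `M = ⌊cN⌋`, the difference is the sum of `x^(i+j) a_i b_j` over the pairs
`i, j ≤ M` with `i + j > M`. Absorbing `(k+1)^(-m) ≤ e^(|m| k)` gives `‖a_k‖ ≤ C_a ρ^k k!` with
`ρ = R e^|m|`, and `i! j! ≤ (i+j)! ≤ (i+j)^(i+j)` bounds each such term by
`C_a C_b (ρ (i+j) / N)^(i+j)`, which is at most `C_a C_b q^(M+1)` as soon as `2cρ ≤ q ≤ 1`.
Taking `q = 1/(4e)`, the at most `(M+1)^2 ≤ 4^(M+1)` terms add up to at most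
`C_a C_b e^(-(M+1)) ≤ C_a C_b e^(-cN)`. -/

open Finset Nat

theorem rpow_neg_le_exp_abs_pow (m : ℝ) (k : ℕ) : ((k : ℝ) + 1) ^ (-m) ≤ Real.exp |m| ^ k :=
  calc ((k : ℝ) + 1) ^ (-m) ≤ ((k : ℝ) + 1) ^ |m| :=
        Real.rpow_le_rpow_of_exponent_le (by simp) (neg_le_abs m)
    _ ≤ Real.exp k ^ |m| :=
        Real.rpow_le_rpow (by positivity) (Real.add_one_le_exp _) (abs_nonneg m)
    _ = Real.exp |m| ^ k := by rw [← Real.exp_mul, ← Real.exp_nat_mul, mul_comm]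

theorem norm_le_mul_pow_mul_factorial_of_le_div_rpow {E : Type*} [SeminormedAddCommGroup E]
    {C R m : ℝ} (hC : 0 ≤ C) (hR : 0 ≤ R) {f : ℕ → E}
    (hf : ∀ k : ℕ, ‖f k‖ ≤ C * R ^ k * k ! / ((k : ℝ) + 1) ^ m) (k : ℕ) :
    ‖f k‖ ≤ C * (R * Real.exp |m|) ^ k * k ! :=
  calc ‖f k‖ ≤ C * R ^ k * k ! * ((k : ℝ) + 1) ^ (-m) := by
        rw [Real.rpow_neg (by positivity), ← div_eq_mul_inv]; exact hf k
    _ ≤ C * R ^ k * k ! * Real.exp |m| ^ k := by gcongr; exact rpow_neg_le_exp_abs_pow m k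
    _ = C * (R * Real.exp |m|) ^ k * k ! := by ring

theorem sum_range_mul_sum_range_sub_sum_range_cauchy {A : Type*} [Ring A] (f g : ℕ → A) (n : ℕ) :
    (∑ i ∈ range n, f i) * (∑ j ∈ range n, g j)
        - ∑ k ∈ range n, ∑ i ∈ range (k + 1), f i * g (k - i)
      = ∑ i ∈ range n, ∑ j ∈ Ico (n - i) n, f i * g j := by
  have cauchy : ∑ k ∈ range n, ∑ i ∈ range (k + 1), f i * g (k - i)
      = ∑ i ∈ range n, f i * ∑ j ∈ range (n - i), g j := by
    simp only [range_eq_Ico, ← sum_Ico_Ico_comm, mul_sum]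
    refine sum_congr rfl fun i _ => ?_
    rw [sum_Ico_eq_sum_range]
    simp only [Nat.add_sub_cancel_left, range_eq_Ico]
  rw [cauchy, sum_mul, ← sum_sub_distrib]
  refine sum_congr rfl fun i _ => ?_
  rw [← mul_sub, ← sum_range_add_sum_Ico _ (Nat.sub_le n i), add_sub_cancel_left, mul_sum]

theorem pow_mul_sum_range_mul {A : Type*} [CommRing A] (x : A) (a b : ℕ → A) (k : ℕ) :
    x ^ k * ∑ i ∈ range (k + 1), a i * b (k - i)
      = ∑ i ∈ range (k + 1), x ^ i * a i * (x ^ (k - i) * b (k - i)) := by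
  rw [mul_sum]
  refine sum_congr rfl fun i hi => ?_
  rw [← Nat.add_sub_of_le (Nat.lt_succ_iff.mp (mem_range.mp hi))]
  simp only [Nat.add_sub_cancel_left, pow_add]
  ring

theorem norm_mul_le_mul_pow_of_le_mul_pow_mul_factorial {A : Type*} [SeminormedRing A]
    {a b : ℕ → A} {Ca Cb ρ : ℝ} (hCa : 0 ≤ Ca) (hCb : 0 ≤ Cb) (hρ : 0 ≤ ρ)
    (ha : ∀ k : ℕ, ‖a k‖ ≤ Ca * ρ ^ k * k !) (hb : ∀ k : ℕ, ‖b k‖ ≤ Cb * ρ ^ k * k !) (i j : ℕ) :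
    ‖a i * b j‖ ≤ Ca * Cb * (ρ * (i + j : ℕ)) ^ (i + j) := by
  have hfac : i ! * j ! ≤ (i + j) ^ (i + j) :=
    (Nat.le_of_dvd (factorial_pos _) (factorial_mul_factorial_dvd_factorial_add i j)).trans
      (factorial_le_pow _)
  calc ‖a i * b j‖ ≤ ‖a i‖ * ‖b j‖ := norm_mul_le _ _
    _ ≤ (Ca * ρ ^ i * i !) * (Cb * ρ ^ j * j !) :=
        mul_le_mul (ha i) (hb j) (norm_nonneg _) (by positivity)
    _ = Ca * Cb * ρ ^ (i + j) * (i ! * j ! : ℕ) := by push_cast; ring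
    _ ≤ Ca * Cb * ρ ^ (i + j) * ((i + j) ^ (i + j) : ℕ) := by gcongr
    _ = Ca * Cb * (ρ * (i + j : ℕ)) ^ (i + j) := by rw [Nat.cast_pow, mul_pow]; ring

theorem norm_sum_tail_pow_mul_le {𝕜 : Type*} [NormedField 𝕜] {a b : ℕ → 𝕜} {Ca Cb ρ q : ℝ}
    (hCa : 0 ≤ Ca) (hCb : 0 ≤ Cb) (hρ : 0 ≤ ρ)
    (ha : ∀ k : ℕ, ‖a k‖ ≤ Ca * ρ ^ k * k !) (hb : ∀ k : ℕ, ‖b k‖ ≤ Cb * ρ ^ k * k !)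
    (hq0 : 0 ≤ q) (hq1 : q ≤ 1) {x : 𝕜} {M : ℕ} (hx : ρ * (2 * M) * ‖x‖ ≤ q) :
    ‖∑ i ∈ range (M + 1), ∑ j ∈ Ico (M + 1 - i) (M + 1), x ^ i * a i * (x ^ j * b j)‖
      ≤ ((M : ℝ) + 1) ^ 2 * (Ca * Cb * q ^ (M + 1)) := by
  have term : ∀ i ∈ range (M + 1), ∀ j ∈ Ico (M + 1 - i) (M + 1),
      ‖x ^ i * a i * (x ^ j * b j)‖ ≤ Ca * Cb * q ^ (M + 1) := by
    intro i hi j hj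
    simp only [mem_range, mem_Ico] at hi hj
    have hbase : ρ * (i + j : ℕ) * ‖x‖ ≤ q :=
      le_trans (by gcongr; exact_mod_cast (by omega : i + j ≤ 2 * M)) hx
    calc ‖x ^ i * a i * (x ^ j * b j)‖ = ‖x‖ ^ (i + j) * ‖a i * b j‖ := by
          simp only [norm_mul, norm_pow]; ring
      _ ≤ ‖x‖ ^ (i + j) * (Ca * Cb * (ρ * (i + j : ℕ)) ^ (i + j)) := by
          gcongr; exact norm_mul_le_mul_pow_of_le_mul_pow_mul_factorial hCa hCb hρ ha hb i j
      _ = Ca * Cb * (ρ * (i + j : ℕ) * ‖x‖) ^ (i + j) := by ring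
      _ ≤ Ca * Cb * q ^ (i + j) := by gcongr
      _ ≤ Ca * Cb * q ^ (M + 1) :=
          mul_le_mul_of_nonneg_left (pow_le_pow_of_le_one hq0 hq1 (by omega)) (by positivity)
  calc _ ≤ ∑ i ∈ range (M + 1), ∑ j ∈ Ico (M + 1 - i) (M + 1), Ca * Cb * q ^ (M + 1) :=
        norm_sum_le_of_le _ fun i hi => norm_sum_le_of_le _ (term i hi)
    _ ≤ ∑ i ∈ range (M + 1), ((M : ℝ) + 1) * (Ca * Cb * q ^ (M + 1)) := by
        gcongr with i
        rw [sum_const, card_Ico, nsmul_eq_mul]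
        gcongr
        exact_mod_cast Nat.sub_le _ _
    _ = ((M : ℝ) + 1) ^ 2 * (Ca * Cb * q ^ (M + 1)) := by
        rw [sum_const, card_range, nsmul_eq_mul]; push_cast; ring

theorem sq_le_four_pow (n : ℕ) : n ^ 2 ≤ 4 ^ n :=
  calc n ^ 2 ≤ (2 ^ n) ^ 2 := Nat.pow_le_pow_left n.lt_two_pow_self.le 2
    _ = 4 ^ n := by rw [← pow_mul, mul_comm, pow_mul]; norm_num

theorem sq_mul_inv_four_mul_exp_one_pow_le (n : ℕ) :
    (n : ℝ) ^ 2 * (4 * Real.exp 1)⁻¹ ^ n ≤ Real.exp (-n) :=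
  calc (n : ℝ) ^ 2 * (4 * Real.exp 1)⁻¹ ^ n ≤ 4 ^ n * (4 * Real.exp 1)⁻¹ ^ n := by
        gcongr; exact_mod_cast sq_le_four_pow n
    _ = Real.exp (-n) := by
        rw [← mul_pow, mul_inv, ← mul_assoc, mul_inv_cancel₀ four_ne_zero, one_mul,
          ← Real.exp_neg, ← Real.exp_nat_mul, mul_neg_one]

/-- The summation of the Cauchy product of two analytic symbol sequences agrees with the
product of the summations, up to an exponentially small error. -/
theorem cauchy_product_summation
    (Ca Cb R m : ℝ) (hCa : 0 ≤ Ca) (hCb : 0 ≤ Cb) (hR : 0 < R) (a b : ℕ → ℂ)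
    (ha : ∀ k : ℕ, ‖a k‖ ≤ Ca * R ^ k * (Nat.factorial k) / ((k : ℝ) + 1) ^ m)
    (hb : ∀ k : ℕ, ‖b k‖ ≤ Cb * R ^ k * (Nat.factorial k) / ((k : ℝ) + 1) ^ m) :
    ∃ c : ℝ, 0 < c ∧ ∃ c' : ℝ, 0 < c' ∧ ∃ C : ℝ, 0 ≤ C ∧ ∀ N : ℕ, 1 ≤ N →
      ‖(
        (∑ k ∈ Finset.range (⌊c * N⌋₊ + 1),
          ((N : ℂ))⁻¹ ^ k * (∑ i ∈ Finset.range (k + 1), a i * b (k - i)))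
        - (∑ k ∈ Finset.range (⌊c * N⌋₊ + 1), ((N : ℂ))⁻¹ ^ k * a k)
          * (∑ k ∈ Finset.range (⌊c * N⌋₊ + 1), ((N : ℂ))⁻¹ ^ k * b k))‖
      ≤ C * Real.exp (-c' * N) := by
  set ρ := R * Real.exp |m|
  have hρ : 0 < ρ := by positivity
  set c := (8 * Real.exp 1 * ρ)⁻¹
  have hc : 0 < c := by positivity
  refine ⟨c, hc, c, hc, Ca * Cb, by positivity, fun N hN => ?_⟩
  have hN' : (0 : ℝ) < N := by exact_mod_cast hN
  set M := ⌊c * N⌋₊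
  have hx : ρ * (2 * M) * ‖(N : ℂ)⁻¹‖ ≤ (4 * Real.exp 1)⁻¹ := by
    rw [norm_inv, Complex.norm_natCast, ← div_eq_mul_inv, div_le_iff₀ hN']
    calc ρ * (2 * M) ≤ ρ * (2 * (c * N)) := by gcongr; exact Nat.floor_le (by positivity)
      _ = (4 * Real.exp 1)⁻¹ * N := by simp only [c]; field_simp; ring
  simp_rw [pow_mul_sum_range_mul]
  rw [norm_sub_rev, sum_range_mul_sum_range_sub_sum_range_cauchy]
  calc _ ≤ ((M : ℝ) + 1) ^ 2 * (Ca * Cb * (4 * Real.exp 1)⁻¹ ^ (M + 1)) :=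
        norm_sum_tail_pow_mul_le hCa hCb hρ.le
          (norm_le_mul_pow_mul_factorial_of_le_div_rpow hCa hR.le ha)
          (norm_le_mul_pow_mul_factorial_of_le_div_rpow hCb hR.le hb)
          (by positivity) (inv_le_one_of_one_le₀ (by linarith [Real.add_one_le_exp 1])) hx
    _ ≤ Ca * Cb * Real.exp (-((M + 1 : ℕ) : ℝ)) := by
        rw [mul_left_comm]; gcongr
        exact_mod_cast sq_mul_inv_four_mul_exp_one_pow_le (M + 1)
    _ ≤ Ca * Cb * Real.exp (-c * N) := by
        gcongr; rw [neg_mul, neg_le_neg_iff]; exact_mod_cast (Nat.lt_floor_add_one _).le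
end

section
/- Let C ≥ 0, R₀ > 0 and m₀ ∈ ℝ, and let (a_k)_{k≥0} be a sequence of complex numbers with a₀ ≠ 0 and |a_k| ≤ C·R₀^k·k!/(k+1)^{m₀} for all k. Then there exist a sequence (b_k)_{k≥0} of complex numbers and constants C' ≥ 0, R' > 0, m' ∈ ℝ such that ∑_{i=0}^k a_i·b_{k-i} equals 1 if k = 0 and equals 0 for every k ≥ 1, and such that |b_k| ≤ C'·R'^k·k!/(k+1)^{m'} for all k ≥ 0. -/
/-!
The inverse is the coefficient sequence of the inverse of the formal power series `∑ aₖ Xᵏ`.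
Since `(k+1)^(-m) ≤ (e^max(0,-m))^k`, the polynomial weight can be absorbed into the geometric
one, so it suffices to treat bounds `D Rᵏ k!`. For these, the Cauchy relations
`a₀ bₙ₊₁ = -∑ aᵢ₊₁ bₙ₋ᵢ` give `‖bₖ‖ ≤ ‖b₀‖ Qᵏ k!` by strong induction with `Q = R (1 + D/‖a₀‖)`:
`i! (n-i)! ≤ n!` removes the factorials, and the choice of `Q` makes the geometric sum
satisfy `(D/‖a₀‖) ∑ Rⁱ⁺¹ Qⁿ⁻ⁱ = R^(n+1) ((1 + D/‖a₀‖)^(n+1) - 1) ≤ Qⁿ⁺¹`.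
-/

open Finset PowerSeries

lemma rpow_neg_le_exp_pow (m : ℝ) (k : ℕ) :
    ((k : ℝ) + 1) ^ (-m) ≤ Real.exp (max 0 (-m)) ^ k := by
  have hk : (1 : ℝ) ≤ k + 1 := by linarith [k.cast_nonneg (α := ℝ)]
  calc ((k : ℝ) + 1) ^ (-m) ≤ ((k : ℝ) + 1) ^ max 0 (-m) :=
        Real.rpow_le_rpow_of_exponent_le hk (le_max_right _ _)
    _ ≤ Real.exp k ^ max 0 (-m) :=
        Real.rpow_le_rpow (by linarith) (Real.add_one_le_exp _) (le_max_left _ _)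
    _ = Real.exp (max 0 (-m)) ^ k := by rw [← Real.exp_mul, ← Real.exp_nat_mul, mul_comm]

lemma le_mul_pow_mul_factorial_of_le_div_rpow {x C R m : ℝ} (hC : 0 ≤ C) (hR : 0 ≤ R) {k : ℕ}
    (hx : x ≤ C * R ^ k * k.factorial / ((k : ℝ) + 1) ^ m) :
    x ≤ C * (R * Real.exp (max 0 (-m))) ^ k * k.factorial := by
  calc x ≤ C * R ^ k * k.factorial * ((k : ℝ) + 1) ^ (-m) := by
        rwa [Real.rpow_neg (by positivity), ← div_eq_mul_inv]
    _ ≤ C * R ^ k * k.factorial * Real.exp (max 0 (-m)) ^ k := by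
        gcongr; exact rpow_neg_le_exp_pow m k
    _ = C * (R * Real.exp (max 0 (-m))) ^ k * k.factorial := by ring

lemma mul_sum_pow_mul_pow_le {E R : ℝ} (hR : 0 ≤ R) (n : ℕ) :
    E * ∑ i ∈ range (n + 1), R ^ (i + 1) * (R * (1 + E)) ^ (n - i) ≤ (R * (1 + E)) ^ (n + 1) := by
  have hterm : ∀ i ∈ range (n + 1), R ^ (i + 1) * (R * (1 + E)) ^ (n - i)
      = R ^ (n + 1) * (1 + E) ^ (n - i) := by
    intro i hi
    rw [mul_pow, ← mul_assoc, ← pow_add, Nat.add_comm i, add_assoc,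
      Nat.add_sub_cancel' (Nat.lt_succ_iff.mp (mem_range.mp hi)), add_comm 1 n]
  have hgeom : E * ∑ i ∈ range (n + 1), (1 + E) ^ (n - i) = (1 + E) ^ (n + 1) - 1 := by
    have hreflect := sum_range_reflect (fun j => (1 + E) ^ j) (n + 1)
    simp only [add_tsub_cancel_right] at hreflect
    rw [hreflect, mul_comm, ← geom_sum_mul, add_sub_cancel_left]
  rw [sum_congr rfl hterm, ← mul_sum, mul_left_comm, hgeom, mul_pow]
  nlinarith [pow_nonneg hR (n + 1)]

lemma sum_range_coeff_mul_coeff_inv {𝕜 : Type*} [Field 𝕜] (a : ℕ → 𝕜) (ha0 : a 0 ≠ 0) (k : ℕ) :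
    ∑ i ∈ range (k + 1), a i * coeff (k - i) (mk a)⁻¹ = if k = 0 then 1 else 0 := by
  have := congrArg (coeff k) (PowerSeries.mul_inv_cancel (mk a) ha0)
  rw [coeff_mul, Finset.Nat.sum_antidiagonal_eq_sum_range_succ
    (fun i j => coeff i (mk a) * coeff j (mk a)⁻¹), coeff_one] at this
  simpa only [coeff_mk] using this

lemma mul_eq_neg_sum_of_cauchy_eq_zero {R : Type*} [Ring R] {a b : ℕ → R} {n : ℕ}
    (h : ∑ i ∈ range (n + 2), a i * b (n + 1 - i) = 0) :
    a 0 * b (n + 1) = -∑ i ∈ range (n + 1), a (i + 1) * b (n - i) := by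
  rw [sum_range_succ'] at h
  simp only [Nat.add_sub_add_right, Nat.sub_zero] at h
  exact eq_neg_of_add_eq_zero_right h

theorem norm_le_mul_pow_mul_factorial_of_cauchy_eq_zero {𝕜 : Type*} [NormedDivisionRing 𝕜]
    {a b : ℕ → 𝕜} (ha0 : a 0 ≠ 0) (hab : ∀ k, 1 ≤ k → ∑ i ∈ range (k + 1), a i * b (k - i) = 0)
    {D R : ℝ} (hR : 0 ≤ R) (ha : ∀ k, ‖a k‖ ≤ D * R ^ k * k.factorial) (k : ℕ) :
    ‖b k‖ ≤ ‖b 0‖ * (R * (1 + D / ‖a 0‖)) ^ k * k.factorial := by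
  set Q := R * (1 + D / ‖a 0‖)
  set B := ‖b 0‖
  have ha0' : 0 < ‖a 0‖ := norm_pos_iff.mpr ha0
  have hD : 0 ≤ D := by simpa using (norm_nonneg _).trans (ha 0)
  have hQ : 0 ≤ Q := by positivity
  induction k using Nat.strong_induction_on with
  | _ k ih =>
  rcases k with _ | n
  · simp [B]
  have hterm : ∀ i ∈ range (n + 1), ‖a (i + 1) * b (n - i)‖
      ≤ D * B * (n + 1).factorial * (R ^ (i + 1) * Q ^ (n - i)) := by
    intro i hi
    have hin : i + 1 ≤ n + 1 := mem_range.mp hi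
    have hfact : ((i + 1).factorial * (n - i).factorial : ℝ) ≤ (n + 1).factorial := by
      exact_mod_cast Nat.add_sub_add_right n 1 i ▸
        Nat.le_of_dvd (n + 1).factorial_pos (Nat.factorial_mul_factorial_dvd_factorial hin)
    calc ‖a (i + 1) * b (n - i)‖ = ‖a (i + 1)‖ * ‖b (n - i)‖ := norm_mul _ _
      _ ≤ (D * R ^ (i + 1) * (i + 1).factorial) * (B * Q ^ (n - i) * (n - i).factorial) :=
          mul_le_mul (ha _) (ih _ (by omega)) (norm_nonneg _) (by positivity)
      _ = D * B * ((i + 1).factorial * (n - i).factorial) * (R ^ (i + 1) * Q ^ (n - i)) := by ring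
      _ ≤ D * B * (n + 1).factorial * (R ^ (i + 1) * Q ^ (n - i)) := by gcongr
  calc ‖b (n + 1)‖ = ‖a 0‖⁻¹ * ‖a 0 * b (n + 1)‖ := by
        rw [norm_mul, inv_mul_cancel_left₀ ha0'.ne']
    _ ≤ ‖a 0‖⁻¹ * ∑ i ∈ range (n + 1), D * B * (n + 1).factorial * (R ^ (i + 1) * Q ^ (n - i)) := by
        rw [mul_eq_neg_sum_of_cauchy_eq_zero (hab (n + 1) (by omega)), norm_neg]
        gcongr
        exact (norm_sum_le _ _).trans (sum_le_sum hterm)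
    _ = B * (n + 1).factorial * (D / ‖a 0‖ * ∑ i ∈ range (n + 1), R ^ (i + 1) * Q ^ (n - i)) := by
        rw [← mul_sum]; ring
    _ ≤ B * Q ^ (n + 1) * (n + 1).factorial := by
        rw [mul_right_comm]
        gcongr
        exact mul_sum_pow_mul_pow_le hR n

/-- An analytic symbol sequence with nonvanishing leading term is invertible for the
Cauchy product, with inverse an analytic symbol sequence. -/
theorem analytic_symbol_inverse
    (C R₀ m₀ : ℝ) (hC : 0 ≤ C) (hR₀ : 0 < R₀) (a : ℕ → ℂ) (ha0 : a 0 ≠ 0)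
    (ha : ∀ k : ℕ, ‖a k‖ ≤ C * R₀ ^ k * (Nat.factorial k) / ((k : ℝ) + 1) ^ m₀) :
    ∃ b : ℕ → ℂ, ∃ C' : ℝ, 0 ≤ C' ∧ ∃ R' : ℝ, 0 < R' ∧ ∃ m' : ℝ,
      ((∑ i ∈ Finset.range 1, a i * b (0 - i)) = 1) ∧
      (∀ k : ℕ, 1 ≤ k → (∑ i ∈ Finset.range (k + 1), a i * b (k - i)) = 0) ∧
      (∀ k : ℕ, ‖b k‖ ≤ C' * R' ^ k * (Nat.factorial k) / ((k : ℝ) + 1) ^ m') := by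
  set b : ℕ → ℂ := fun k => coeff k (mk a)⁻¹
  set R := R₀ * Real.exp (max 0 (-m₀))
  have hR : 0 < R := by positivity
  have hcauchy : ∀ k, 1 ≤ k → ∑ i ∈ range (k + 1), a i * b (k - i) = 0 := fun k hk => by
    rw [sum_range_coeff_mul_coeff_inv a ha0 k, if_neg (by omega)]
  have ha' : ∀ k, ‖a k‖ ≤ C * R ^ k * k.factorial := fun k =>
    le_mul_pow_mul_factorial_of_le_div_rpow hC hR₀.le (ha k)
  refine ⟨b, ‖b 0‖, norm_nonneg _, R * (1 + C / ‖a 0‖), by positivity, 0,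
    by simpa [b] using sum_range_coeff_mul_coeff_inv a ha0 0, hcauchy, fun k => ?_⟩
  rw [Real.rpow_zero, div_one]
  exact norm_le_mul_pow_mul_factorial_of_cauchy_eq_zero ha0 hcauchy hR.le ha' k
end

section
/- There exists a universal constant C₀ ≥ 0 with the following property. Let n ≥ 1, let U ⊆ ℝⁿ be open, let m ≥ 3 be real, let r > 0 and C_f, C_g ≥ 0, and let f, g : U → ℂ be smooth functions such that for all j ≥ 0 and all x ∈ U one has ‖iteratedFDeriv ℝ j f x‖ ≤ C_f·r^j·j!/(j+1)^m and ‖iteratedFDeriv ℝ j g x‖ ≤ C_g·r^j·j!/(j+1)^m. Then for all j ≥ 0 and all x ∈ U, ‖iteratedFDeriv ℝ j (f·g) x‖ ≤ C₀·C_f·C_g·r^j·j!/(j+1)^m. -/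
lemma sum_inv_sq_le (j : ℕ) :
    ∑ i ∈ Finset.range (j+1), (1:ℝ)/((i:ℝ)+1)^2 ≤ 2 - 1/((j:ℝ)+1) := by
  induction j with
  | zero => norm_num
  | succ k ih =>
    rw [Finset.sum_range_succ]
    have h1 : (0:ℝ) < (k:ℝ)+1 := by positivity
    have h2 : (0:ℝ) < (k:ℝ)+2 := by positivity
    have key : (1:ℝ)/(((k+1:ℕ):ℝ)+1)^2 ≤ 1/((k:ℝ)+1) - 1/((k:ℝ)+2) := by
      push_cast
      have e : (1:ℝ)/((k:ℝ)+1) - 1/((k:ℝ)+2) = 1/(((k:ℝ)+1)*((k:ℝ)+2)) := by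
        field_simp; ring
      rw [e]
      apply one_div_le_one_div_of_le (by positivity)
      nlinarith
    have hc : ((k+1:ℕ):ℝ) + 1 = (k:ℝ)+2 := by push_cast; ring
    rw [hc] at key ⊢
    linarith

lemma sum_inv_cube_le (j : ℕ) :
    ∑ i ∈ Finset.range (j+1), (1:ℝ)/((i:ℝ)+1)^3 ≤ 2 := by
  have h := sum_inv_sq_le j
  have step : ∑ i ∈ Finset.range (j+1), (1:ℝ)/((i:ℝ)+1)^3 ≤
      ∑ i ∈ Finset.range (j+1), (1:ℝ)/((i:ℝ)+1)^2 := by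
    apply Finset.sum_le_sum
    intro i _
    apply one_div_le_one_div_of_le (by positivity)
    have : (0:ℝ) ≤ (i:ℝ) := Nat.cast_nonneg i
    nlinarith
  have : (0:ℝ) < 1/((j:ℝ)+1) := by positivity
  linarith

lemma cube_sum_le (j : ℕ) :
    ∑ i ∈ Finset.range (j+1),
      (((j:ℝ)+1)/(((i:ℝ)+1)*(((j-i:ℕ):ℝ)+1)))^3 ≤ 16 := by
  have key : ∀ i ∈ Finset.range (j+1),
      (((j:ℝ)+1)/(((i:ℝ)+1)*(((j-i:ℕ):ℝ)+1)))^3 ≤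
        4*((1:ℝ)/((i:ℝ)+1))^3 + 4*((1:ℝ)/(((j-i:ℕ):ℝ)+1))^3 := by
    intro i hi
    have hij : i ≤ j := by simpa using Finset.mem_range_succ_iff.mp hi
    have hcast : ((j-i:ℕ):ℝ) = (j:ℝ) - (i:ℝ) := by
      rw [Nat.cast_sub hij]
    have hA : (0:ℝ) < (i:ℝ)+1 := by positivity
    have hB : (0:ℝ) < ((j-i:ℕ):ℝ)+1 := by positivity
    set a : ℝ := 1/((i:ℝ)+1) with ha
    set b : ℝ := 1/(((j-i:ℕ):ℝ)+1) with hb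
    have ha0 : 0 < a := by positivity
    have hb0 : 0 < b := by positivity
    have hr : ((j:ℝ)+1)/(((i:ℝ)+1)*(((j-i:ℕ):ℝ)+1)) ≤ a + b := by
      have e : a + b = (((i:ℝ)+1)+(((j-i:ℕ):ℝ)+1))/(((i:ℝ)+1)*(((j-i:ℕ):ℝ)+1)) := by
        rw [ha, hb, one_div_add_one_div (ne_of_gt hA) (ne_of_gt hB)]
      rw [e, div_le_div_iff_of_pos_right (by positivity)]
      rw [hcast]; linarith
    have hr0 : 0 ≤ ((j:ℝ)+1)/(((i:ℝ)+1)*(((j-i:ℕ):ℝ)+1)) := by positivity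
    calc (((j:ℝ)+1)/(((i:ℝ)+1)*(((j-i:ℕ):ℝ)+1)))^3 ≤ (a+b)^3 := by
          apply pow_le_pow_left₀ hr0 hr 3
      _ ≤ 4*a^3 + 4*b^3 := by nlinarith [sq_nonneg (a-b), mul_pos ha0 hb0]
  calc ∑ i ∈ Finset.range (j+1), (((j:ℝ)+1)/(((i:ℝ)+1)*(((j-i:ℕ):ℝ)+1)))^3
      ≤ ∑ i ∈ Finset.range (j+1),
          (4*((1:ℝ)/((i:ℝ)+1))^3 + 4*((1:ℝ)/(((j-i:ℕ):ℝ)+1))^3) :=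
        Finset.sum_le_sum key
    _ = 4 * (∑ i ∈ Finset.range (j+1), (1:ℝ)/((i:ℝ)+1)^3)
        + 4 * (∑ i ∈ Finset.range (j+1), (1:ℝ)/(((j-i:ℕ):ℝ)+1)^3) := by
        rw [Finset.sum_add_distrib, ← Finset.mul_sum, ← Finset.mul_sum]
        simp [div_pow, one_pow]
    _ = 8 * (∑ i ∈ Finset.range (j+1), (1:ℝ)/((i:ℝ)+1)^3) := by
        have : ∑ i ∈ Finset.range (j+1), (1:ℝ)/(((j-i:ℕ):ℝ)+1)^3
            = ∑ i ∈ Finset.range (j+1), (1:ℝ)/((i:ℝ)+1)^3 := by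
          rw [← Finset.sum_range_reflect]
          apply Finset.sum_congr rfl
          intro i hi
          have hij : i ≤ j := Finset.mem_range_succ_iff.mp hi
          have hre : j - (j + 1 - 1 - i) = i := by omega
          rw [hre]
        linarith [this]
    _ ≤ 8 * 2 := by have := sum_inv_cube_le j; linarith
    _ = 16 := by norm_num

/-- The analytic class `H(m,r,U)` is stable under pointwise multiplication when `m ≥ 3`,
with a universal constant. -/
theorem analytic_class_stable_under_product :
    ∃ C₀ : ℝ, 0 ≤ C₀ ∧
      ∀ (n : ℕ), 1 ≤ n → ∀ (U : Set (Fin n → ℝ)), IsOpen U →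
      ∀ (m : ℝ), 3 ≤ m → ∀ (r : ℝ), 0 < r →
      ∀ (Cf Cg : ℝ), 0 ≤ Cf → 0 ≤ Cg →
      ∀ (f g : (Fin n → ℝ) → ℂ), ContDiff ℝ (⊤ : ℕ∞) f → ContDiff ℝ (⊤ : ℕ∞) g →
        (∀ (j : ℕ), ∀ x ∈ U, ‖iteratedFDeriv ℝ j f x‖ ≤
          Cf * r ^ j * (Nat.factorial j) / ((j : ℝ) + 1) ^ m) →
        (∀ (j : ℕ), ∀ x ∈ U, ‖iteratedFDeriv ℝ j g x‖ ≤
          Cg * r ^ j * (Nat.factorial j) / ((j : ℝ) + 1) ^ m) →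
        ∀ (j : ℕ), ∀ x ∈ U,
          ‖iteratedFDeriv ℝ j (fun y => f y * g y) x‖ ≤
            C₀ * Cf * Cg * r ^ j * (Nat.factorial j) / ((j : ℝ) + 1) ^ m := by
  refine ⟨16, by norm_num, ?_⟩
  intro n hn U hU m hm r hr Cf Cg hCf hCg f g hf hg hFf hFg j x hx
  have hjm : (0:ℝ) < ((j:ℝ)+1) ^ m := Real.rpow_pos_of_pos (by positivity) m
  have H := norm_iteratedFDeriv_mul_le hf hg x (n := j) (by exact_mod_cast (le_top : (j : ℕ∞) ≤ ⊤))
  -- bound each summand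
  have hsum : ∑ i ∈ Finset.range (j+1),
      (j.choose i : ℝ) * ‖iteratedFDeriv ℝ i f x‖ * ‖iteratedFDeriv ℝ (j-i) g x‖ ≤
      ∑ i ∈ Finset.range (j+1),
        (Cf * Cg * r^j * (Nat.factorial j) / ((j:ℝ)+1)^m) *
          ((((j:ℝ)+1)/(((i:ℝ)+1)*(((j-i:ℕ):ℝ)+1)))^(3:ℕ)) := by
    apply Finset.sum_le_sum
    intro i hi
    have hij : i ≤ j := Finset.mem_range_succ_iff.mp hi
    have hP : (0:ℝ) < ((i:ℝ)+1) ^ m := Real.rpow_pos_of_pos (by positivity) m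
    have hQ : (0:ℝ) < (((j-i:ℕ):ℝ)+1) ^ m := Real.rpow_pos_of_pos (by positivity) m
    have h1 : (j.choose i : ℝ) * ‖iteratedFDeriv ℝ i f x‖ * ‖iteratedFDeriv ℝ (j-i) g x‖ ≤
        (j.choose i : ℝ) * (Cf * r^i * (Nat.factorial i) / ((i:ℝ)+1)^m) *
          (Cg * r^(j-i) * (Nat.factorial (j-i)) / (((j-i:ℕ):ℝ)+1)^m) := by
      apply mul_le_mul
      · apply mul_le_mul_of_nonneg_left (hFf i x hx) (by positivity)
      · exact hFg (j-i) x hx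
      · positivity
      · have : (0:ℝ) ≤ Cf * r^i * (Nat.factorial i) / ((i:ℝ)+1)^m := by positivity
        positivity
    have hfac : (j.choose i : ℝ) * (Nat.factorial i) * (Nat.factorial (j-i))
        = (Nat.factorial j : ℝ) := by
      exact_mod_cast congrArg (Nat.cast : ℕ → ℝ)
        (Nat.choose_mul_factorial_mul_factorial hij)
    have hrj : r^i * r^(j-i) = r^j := by
      rw [← pow_add, Nat.add_sub_cancel' hij]
    have hratio : (((j:ℝ)+1)/(((i:ℝ)+1)*(((j-i:ℕ):ℝ)+1)))^m
        = ((j:ℝ)+1)^m / (((i:ℝ)+1)^m * ((((j-i:ℕ):ℝ)+1))^m) := by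
      rw [Real.div_rpow (by positivity) (by positivity),
        Real.mul_rpow (by positivity) (by positivity)]
    have h2 : (j.choose i : ℝ) * (Cf * r^i * (Nat.factorial i) / ((i:ℝ)+1)^m) *
          (Cg * r^(j-i) * (Nat.factorial (j-i)) / (((j-i:ℕ):ℝ)+1)^m)
        = (Cf * Cg * r^j * (Nat.factorial j) / ((j:ℝ)+1)^m) *
          ((((j:ℝ)+1)/(((i:ℝ)+1)*(((j-i:ℕ):ℝ)+1)))^m) := by
      rw [hratio, ← hfac, ← hrj]
      field_simp
    have hbase_pos : (0:ℝ) < ((j:ℝ)+1)/(((i:ℝ)+1)*(((j-i:ℕ):ℝ)+1)) := by positivity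
    have hbase_le : ((j:ℝ)+1)/(((i:ℝ)+1)*(((j-i:ℕ):ℝ)+1)) ≤ 1 := by
      rw [div_le_one (by positivity)]
      have hcast : ((j-i:ℕ):ℝ) = (j:ℝ) - (i:ℝ) := by rw [Nat.cast_sub hij]
      rw [hcast]
      have hi0 : (0:ℝ) ≤ (i:ℝ) := Nat.cast_nonneg i
      have hji : (i:ℝ) ≤ (j:ℝ) := by exact_mod_cast hij
      nlinarith [mul_nonneg hi0 (sub_nonneg.mpr hji)]
    have h3 : (((j:ℝ)+1)/(((i:ℝ)+1)*(((j-i:ℕ):ℝ)+1)))^m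
        ≤ (((j:ℝ)+1)/(((i:ℝ)+1)*(((j-i:ℕ):ℝ)+1)))^(3:ℕ) := by
      have := Real.rpow_le_rpow_of_exponent_ge hbase_pos hbase_le hm
      rwa [show ((3:ℝ)) = ((3:ℕ):ℝ) by norm_num, Real.rpow_natCast] at this
    calc (j.choose i : ℝ) * ‖iteratedFDeriv ℝ i f x‖ * ‖iteratedFDeriv ℝ (j-i) g x‖
        ≤ (j.choose i : ℝ) * (Cf * r^i * (Nat.factorial i) / ((i:ℝ)+1)^m) *
          (Cg * r^(j-i) * (Nat.factorial (j-i)) / (((j-i:ℕ):ℝ)+1)^m) := h1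
      _ = (Cf * Cg * r^j * (Nat.factorial j) / ((j:ℝ)+1)^m) *
          ((((j:ℝ)+1)/(((i:ℝ)+1)*(((j-i:ℕ):ℝ)+1)))^m) := h2
      _ ≤ (Cf * Cg * r^j * (Nat.factorial j) / ((j:ℝ)+1)^m) *
          ((((j:ℝ)+1)/(((i:ℝ)+1)*(((j-i:ℕ):ℝ)+1)))^(3:ℕ)) := by
        apply mul_le_mul_of_nonneg_left h3 (by positivity)
  have hfin : ∑ i ∈ Finset.range (j+1),
        (Cf * Cg * r^j * (Nat.factorial j) / ((j:ℝ)+1)^m) *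
          ((((j:ℝ)+1)/(((i:ℝ)+1)*(((j-i:ℕ):ℝ)+1)))^(3:ℕ))
      ≤ 16 * Cf * Cg * r ^ j * (Nat.factorial j) / ((j : ℝ) + 1) ^ m := by
    rw [← Finset.mul_sum]
    have hK : (0:ℝ) ≤ Cf * Cg * r^j * (Nat.factorial j) / ((j:ℝ)+1)^m := by positivity
    calc (Cf * Cg * r^j * (Nat.factorial j) / ((j:ℝ)+1)^m) *
          ∑ i ∈ Finset.range (j+1), (((j:ℝ)+1)/(((i:ℝ)+1)*(((j-i:ℕ):ℝ)+1)))^(3:ℕ)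
        ≤ (Cf * Cg * r^j * (Nat.factorial j) / ((j:ℝ)+1)^m) * 16 :=
          mul_le_mul_of_nonneg_left (cube_sum_le j) hK
      _ = 16 * Cf * Cg * r ^ j * (Nat.factorial j) / ((j : ℝ) + 1) ^ m := by ring
  exact le_trans H (le_trans hsum hfin)
end

section
/- (Singular value / KAK decomposition of symplectic matrices.) Let d ≥ 1 and let S be a real matrix indexed by (Fin d) ⊕ (Fin d) belonging to the symplectic group (Sᵀ·J·S = J with J = fromBlocks 0 (−1) 1 0). Then there exist matrices U₁, U₂ that are both symplectic and orthogonal (UᵀU = 1), and a function μ : Fin d → ℝ with μ i > 0 for every i, such that S = U₁ · diagonal (Sum.elim μ (fun i => (μ i)⁻¹)) · U₂. -/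
/-!
`A := Sᵀ S` is positive semidefinite and symplectic, so `A J A = J`: `J` maps `ν`-eigenvectors of
`A` to `ν⁻¹`-eigenvectors. As `J` is orthogonal with `J² = -1`, the plane spanned by a unit
eigenvector `u` of `A` and by `J u` has an orthogonal complement invariant under `A` and `J`, so by
induction `A` has an orthonormal eigenbasis of the form `(c, J c)`: an orthogonal symplectic `W`
with `Wᵀ A W = diag(ν, ν⁻¹)`. With `D = diag(√ν, √ν⁻¹)`, `S = (S W D⁻¹) D Wᵀ`, and `S W D⁻¹` is
orthogonal since its Gram matrix is `D⁻¹ Wᵀ A W D⁻¹ = 1`.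
-/

open Matrix Module
open scoped RealInnerProductSpace

section ComplexStructure

variable {E : Type*} [NormedAddCommGroup E] [InnerProductSpace ℝ E]

theorem inner_map_map_of_skew {J : E →ₗ[ℝ] E} (hJJ : ∀ x, J (J x) = -x)
    (hJ : ∀ x y, ⟪J x, y⟫ = -⟪x, J y⟫) (x y : E) : ⟪J x, J y⟫ = ⟪x, y⟫ := by
  rw [hJ, hJJ, inner_neg_right, neg_neg]

theorem inner_self_map_of_skew {J : E →ₗ[ℝ] E} (hJ : ∀ x y, ⟪J x, y⟫ = -⟪x, J y⟫) (x : E) :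
    ⟪x, J x⟫ = 0 := by
  have h := hJ x x
  rw [real_inner_comm] at h
  linarith

theorem apply_map_eq_inv_smul_of_apply_eq_smul {J f : E →ₗ[ℝ] E} (hfJf : ∀ x, f (J (f x)) = J x)
    {u : E} {μ : ℝ} (hu : f u = μ • u) : f (J u) = μ⁻¹ • J u := by
  rcases eq_or_ne μ 0 with rfl | hμ
  · have hJu : J u = 0 := by rw [← hfJf, hu, zero_smul, map_zero, map_zero]
    simp [hJu]
  · rw [eq_inv_smul_iff₀ hμ, ← map_smul, ← map_smul, ← hu, hfJf]

theorem LinearMap.IsSymmetric.exists_unit_eigenvector_mem {f : E →ₗ[ℝ] E} (hf : f.IsSymmetric)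
    {K : Submodule ℝ E} (hK : ∀ x ∈ K, f x ∈ K) {n : ℕ} (hn : finrank ℝ K = n + 1) :
    ∃ u ∈ K, ‖u‖ = 1 ∧ ∃ μ : ℝ, f u = μ • u := by
  have : FiniteDimensional ℝ K := Module.finite_of_finrank_eq_succ hn
  have hg := hf.restrict_invariant hK
  refine ⟨_, (hg.eigenvectorBasis hn 0).2, (hg.eigenvectorBasis hn).orthonormal.1 0,
    hg.eigenvalues hn 0, ?_⟩
  exact congrArg Subtype.val (hg.apply_eigenvectorBasis hn 0)

theorem Submodule.finrank_orthogonal_span_singleton_inf {K : Submodule ℝ E} {v : E}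
    (hv : v ∈ K) (hv0 : v ≠ 0) {n : ℕ} (hn : finrank ℝ K = n + 1) :
    finrank ℝ ((ℝ ∙ v)ᗮ ⊓ K : Submodule ℝ E) = n := by
  have : FiniteDimensional ℝ K := Module.finite_of_finrank_eq_succ hn
  refine finrank_add_inf_finrank_orthogonal' ((span_singleton_le_iff_mem _ _).2 hv) ?_
  rw [finrank_span_singleton hv0, hn, add_comm]

theorem orthonormal_sumElim_cons {J : E →ₗ[ℝ] E} (hJJ : ∀ x, J (J x) = -x)
    (hJ : ∀ x y, ⟪J x, y⟫ = -⟪x, J y⟫) {d : ℕ} {u : E} (hu : ‖u‖ = 1) {b : Fin d → E}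
    (hb : Orthonormal ℝ (Sum.elim b (J ∘ b))) (hub : ∀ i, ⟪u, b i⟫ = 0)
    (hJub : ∀ i, ⟪J u, b i⟫ = 0) :
    Orthonormal ℝ (Sum.elim (Fin.cons u b : Fin (d + 1) → E) (J ∘ Fin.cons u b)) := by
  have huJb (i) : ⟪u, J (b i)⟫ = 0 := by rw [← neg_eq_zero, ← hJ, hJub]
  have hJuu : ⟪J u, u⟫ = 0 := by rw [real_inner_comm, inner_self_map_of_skew hJ]
  have hJ_iso := inner_map_map_of_skew hJJ hJ
  have hJu : ‖J u‖ = 1 := by rw [norm_eq_sqrt_real_inner, hJ_iso, ← norm_eq_sqrt_real_inner, hu]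
  rw [orthonormal_iff_ite] at hb ⊢
  simp only [Sum.forall, Sum.elim_inl, Sum.elim_inr, Function.comp_apply, reduceCtorEq,
    if_false, Sum.inl.injEq, Sum.inr.injEq, forall_and] at hb ⊢
  obtain ⟨⟨hbb, hbJb⟩, hJbb, -⟩ := hb
  refine ⟨⟨fun i j => ?_, fun i j => ?_⟩, fun i j => ?_, fun i j => ?_⟩ <;>
    cases i using Fin.cases <;> cases j using Fin.cases <;>
    simp [hu, hJu, hub, hJub, huJb, hJuu, hJ_iso, real_inner_comm u, real_inner_comm (J u), hbb,
      hbJb, hJbb, Fin.succ_ne_zero, (Fin.succ_ne_zero _).symm]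

theorem exists_orthonormal_eigenvectors_of_complexStructure {J f : E →ₗ[ℝ] E}
    (hJJ : ∀ x, J (J x) = -x) (hJ : ∀ x y, ⟪J x, y⟫ = -⟪x, J y⟫) (hf : f.IsPositive)
    (hfJf : ∀ x, f (J (f x)) = J x) (d : ℕ) {K : Submodule ℝ E} (hK : finrank ℝ K = 2 * d)
    (hJK : ∀ x ∈ K, J x ∈ K) (hfK : ∀ x ∈ K, f x ∈ K) :
    ∃ (b : Fin d → E) (μ : Fin d → ℝ), (∀ i, b i ∈ K) ∧ Orthonormal ℝ (Sum.elim b (J ∘ b)) ∧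
      (∀ i, 0 < μ i) ∧ ∀ i, f (b i) = μ i • b i := by
  induction d generalizing K with
  | zero => exact ⟨Fin.elim0, Fin.elim0, nofun, ⟨nofun, nofun⟩, nofun, nofun⟩
  | succ d ih =>
    obtain ⟨u, huK, hu, μ, hfu⟩ :=
      hf.isSymmetric.exists_unit_eigenvector_mem hfK (n := 2 * d + 1) (by rw [hK]; ring)
    have hu0 : u ≠ 0 := norm_ne_zero_iff.mp (by rw [hu]; exact one_ne_zero)
    have hJu0 : J u ≠ 0 := fun h => hu0 (by simpa [h] using hJJ u)
    have hμ : 0 < μ := by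
      refine lt_of_le_of_ne ?_ fun hμ0 => hJu0 ?_
      · simpa [hfu, real_inner_smul_left, hu] using hf.inner_nonneg_left u
      · rw [← hfJf, hfu, ← hμ0, zero_smul, map_zero, map_zero]
    have hfJu := apply_map_eq_inv_smul_of_apply_eq_smul hfJf hfu
    set K' := (ℝ ∙ u)ᗮ ⊓ ((ℝ ∙ J u)ᗮ ⊓ K)
    have hmem (x : E) : x ∈ K' ↔ ⟪u, x⟫ = 0 ∧ ⟪J u, x⟫ = 0 ∧ x ∈ K := by
      simp only [K', Submodule.mem_inf, Submodule.mem_orthogonal_singleton_iff_inner_right]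
    have hK' : finrank ℝ K' = 2 * d := by
      refine Submodule.finrank_orthogonal_span_singleton_inf (Submodule.mem_inf.2 ⟨?_, huK⟩) hu0
        (Submodule.finrank_orthogonal_span_singleton_inf (hJK u huK) hJu0 (by rw [hK]; ring))
      rw [Submodule.mem_orthogonal_singleton_iff_inner_right, real_inner_comm,
        inner_self_map_of_skew hJ]
    have hJK' : ∀ x ∈ K', J x ∈ K' := by
      simp only [hmem]
      rintro x ⟨hux, hJux, hxK⟩
      exact ⟨by rw [← neg_eq_zero, ← hJ, hJux], by rw [inner_map_map_of_skew hJJ hJ, hux],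
        hJK x hxK⟩
    have hfK' : ∀ x ∈ K', f x ∈ K' := by
      simp only [hmem]
      rintro x ⟨hux, hJux, hxK⟩
      exact ⟨by rw [← hf.isSymmetric, hfu, real_inner_smul_left, hux, mul_zero],
        by rw [← hf.isSymmetric, hfJu, real_inner_smul_left, hJux, mul_zero], hfK x hxK⟩
    obtain ⟨b, ν, hbK', hb, hν, hfb⟩ := ih hK' hJK' hfK'
    simp only [hmem, forall_and] at hbK'
    exact ⟨Fin.cons u b, Fin.cons μ ν, Fin.forall_fin_succ.2 ⟨huK, hbK'.2.2⟩,
      orthonormal_sumElim_cons hJJ hJ hu hb hbK'.1 hbK'.2.1, Fin.forall_fin_succ.2 ⟨hμ, hν⟩,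
      Fin.forall_fin_succ.2 ⟨hfu, hfb⟩⟩

end ComplexStructure

namespace Matrix

variable {n : Type*} [Fintype n] [DecidableEq n]

theorem inner_toEuclideanLin_left (A : Matrix n n ℝ) (x y : EuclideanSpace ℝ n) :
    ⟪toEuclideanLin A x, y⟫ = ⟪x, toEuclideanLin Aᵀ y⟫ := by
  rw [← conjTranspose_eq_transpose_of_trivial, toEuclideanLin_conjTranspose_eq_adjoint,
    LinearMap.adjoint_inner_right]

theorem transpose_mul_mul_eq_of_inner (b : n → EuclideanSpace ℝ n) (M : Matrix n n ℝ) :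
    (of fun i j => b j i)ᵀ * M * of (fun i j => b j i) =
      of fun i j => ⟪b i, toEuclideanLin M (b j)⟫ := by
  ext i j
  simp only [mul_apply, of_apply, transpose_apply, toLpLin_apply, PiLp.inner_apply, mulVec,
    dotProduct, Finset.sum_mul, RCLike.inner_apply, conj_trivial]
  rw [Finset.sum_comm]
  exact Finset.sum_congr rfl fun _ _ => Finset.sum_congr rfl fun _ _ => by ring

theorem diagonal_sumElim_mem_symplecticGroup {R : Type*} [CommRing R] {l : Type*} [DecidableEq l]
    [Fintype l] {a c : l → R} (h : ∀ i, a i * c i = 1) :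
    diagonal (Sum.elim a c) ∈ symplecticGroup l R := by
  rw [SymplecticGroup.mem_iff', diagonal_transpose]
  ext (i | i) (j | j) <;> by_cases hij : i = j <;>
    simp [J, diagonal_mul, mul_diagonal, hij, h, mul_comm (c _)]

theorem exists_orthogonal_symplectic_diagonalization {d : ℕ}
    {A : Matrix (Fin d ⊕ Fin d) (Fin d ⊕ Fin d) ℝ} (hA : A.PosSemidef)
    (hAJ : A ∈ symplecticGroup (Fin d) ℝ) :
    ∃ W ∈ symplecticGroup (Fin d) ℝ, Wᵀ * W = 1 ∧ ∃ ν : Fin d → ℝ, (∀ i, 0 < ν i) ∧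
      Wᵀ * A * W = diagonal (Sum.elim ν fun i => (ν i)⁻¹) := by
  set Jl := toEuclideanLin (J (Fin d) ℝ)
  have hJJ (x) : Jl (Jl x) = -x := by
    rw [← LinearMap.comp_apply, ← toLpLin_mul_same, J_squared]
    simp
  have hJ (x y) : ⟪Jl x, y⟫ = -⟪x, Jl y⟫ := by
    rw [inner_toEuclideanLin_left, J_transpose, map_neg, LinearMap.neg_apply, inner_neg_right]
  have hAJA : A * J (Fin d) ℝ * A = J (Fin d) ℝ := by
    simpa [← conjTranspose_eq_transpose_of_trivial, hA.isHermitian.eq] using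
      SymplecticGroup.mem_iff'.1 hAJ
  have hfJf (x) : toEuclideanLin A (Jl (toEuclideanLin A x)) = Jl x := by
    simp only [Jl, ← LinearMap.comp_apply, ← toLpLin_mul_same, ← Matrix.mul_assoc, hAJA]
  obtain ⟨c, ν, -, hc, hν, hfc⟩ := exists_orthonormal_eigenvectors_of_complexStructure hJJ hJ
    (isPositive_toEuclideanLin_iff.2 hA) hfJf d (K := ⊤)
    (by simp [finrank_euclideanSpace]; ring) (fun _ _ => trivial) (fun _ _ => trivial)
  set b := Sum.elim c (Jl ∘ c)
  have hbb := orthonormal_iff_ite.1 hc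
  have hJb (j) : Jl (b (.inr j)) = -b (.inl j) := hJJ (c j)
  have hAb (j) : toEuclideanLin A (b (.inr j)) = (ν j)⁻¹ • b (.inr j) :=
    apply_map_eq_inv_smul_of_apply_eq_smul hfJf (hfc j)
  refine ⟨of fun i j => b j i, ?_, ?_, ν, hν, ?_⟩
  · rw [SymplecticGroup.mem_iff', transpose_mul_mul_eq_of_inner]
    ext i (j | j)
    · rw [of_apply, show Jl (b (.inl j)) = b (.inr j) from rfl, hbb]
      rcases i with i | i <;> simp [J, one_apply, eq_comm]
    · rw [of_apply, hJb, inner_neg_right, hbb]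
      rcases i with i | i <;> simp [J, one_apply, eq_comm]
  · have h := transpose_mul_mul_eq_of_inner b 1
    rw [Matrix.mul_one, toLpLin_one] at h
    ext i j
    rw [h, of_apply, LinearMap.id_apply, hbb, one_apply]
  · rw [transpose_mul_mul_eq_of_inner]
    ext i (j | j)
    · rw [of_apply, show toEuclideanLin A (b (.inl j)) = ν j • b (.inl j) from hfc j,
        inner_smul_right, hbb, diagonal_apply]
      split_ifs with h <;> simp [h]
    · rw [of_apply, hAb, inner_smul_right, hbb, diagonal_apply]
      split_ifs with h <;> simp [h]

end Matrix

theorem symplectic_KAK_decomposition_general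
    (d : ℕ) (S : Matrix (Fin d ⊕ Fin d) (Fin d ⊕ Fin d) ℝ)
    (hS : S ∈ Matrix.symplecticGroup (Fin d) ℝ) :
    ∃ U₁ ∈ Matrix.symplecticGroup (Fin d) ℝ, ∃ U₂ ∈ Matrix.symplecticGroup (Fin d) ℝ,
      U₁ᵀ * U₁ = 1 ∧ U₂ᵀ * U₂ = 1 ∧
      ∃ μ : Fin d → ℝ, (∀ i, 0 < μ i) ∧
        S = U₁ * Matrix.diagonal (Sum.elim μ (fun i => (μ i)⁻¹)) * U₂ := by
  obtain ⟨W, hW, hWW, ν, hν, hWAW⟩ := exists_orthogonal_symplectic_diagonalization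
    (by simpa using posSemidef_conjTranspose_mul_self S)
    (mul_mem (SymplecticGroup.transpose_mem hS) hS)
  have hWW' : W * Wᵀ = 1 := mul_eq_one_comm.1 hWW
  obtain ⟨μ, hμ, rfl⟩ : ∃ μ : Fin d → ℝ, (∀ i, 0 < μ i) ∧ ν = fun i => μ i ^ 2 :=
    ⟨fun i => √(ν i), fun i => Real.sqrt_pos.2 (hν i),
      funext fun i => (Real.sq_sqrt (hν i).le).symm⟩
  set D' := diagonal (Sum.elim (fun i => (μ i)⁻¹) μ)
  have hD'D : D' * diagonal (Sum.elim μ fun i => (μ i)⁻¹) = 1 := by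
    rw [diagonal_mul_diagonal, ← diagonal_one]
    congr 1; ext (i | i) <;> simp [(hμ i).ne']
  refine ⟨S * W * D', mul_mem (mul_mem hS hW) (diagonal_sumElim_mem_symplecticGroup fun i =>
    inv_mul_cancel₀ (hμ i).ne'), Wᵀ, SymplecticGroup.transpose_mem hW, ?_,
    by rw [transpose_transpose, hWW'], μ, hμ, ?_⟩
  · calc (S * W * D')ᵀ * (S * W * D') = D' * (Wᵀ * (Sᵀ * S) * W) * D' := by
          simp only [transpose_mul, D', diagonal_transpose, Matrix.mul_assoc]
      _ = 1 := by
          rw [hWAW, diagonal_mul_diagonal, diagonal_mul_diagonal, ← diagonal_one]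
          congr 1; ext (i | i) <;> simp [(hμ i).ne', pow_two]
  · calc S = S * W * (D' * diagonal (Sum.elim μ fun i => (μ i)⁻¹)) * Wᵀ := by
          rw [hD'D, Matrix.mul_one, Matrix.mul_assoc, hWW', Matrix.mul_one]
      _ = _ := by simp only [Matrix.mul_assoc]

/-- KAK (singular value) decomposition of a symplectic matrix: `S = U₁ D U₂` with `U₁, U₂`
symplectic and orthogonal, and `D` diagonal with entries `μᵢ, μᵢ⁻¹`, `μᵢ > 0`. -/
theorem symplectic_KAK_decomposition
    (d : ℕ) (hd : 1 ≤ d) (S : Matrix (Fin d ⊕ Fin d) (Fin d ⊕ Fin d) ℝ)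
    (hS : S ∈ Matrix.symplecticGroup (Fin d) ℝ) :
    ∃ U₁ ∈ Matrix.symplecticGroup (Fin d) ℝ, ∃ U₂ ∈ Matrix.symplecticGroup (Fin d) ℝ,
      U₁ᵀ * U₁ = 1 ∧ U₂ᵀ * U₂ = 1 ∧
      ∃ μ : Fin d → ℝ, (∀ i, 0 < μ i) ∧
        S = U₁ * Matrix.diagonal (Sum.elim μ (fun i => (μ i)⁻¹)) * U₂ :=
  symplectic_KAK_decomposition_general d S hS
end

section
/- Let E be a nontrivial finite-dimensional complex inner product space, let T : E →ₗ[ℂ] E be a symmetric linear map (⟪T x, y⟫ = ⟪x, T y⟫ for all x, y), let λ ∈ ℝ, ε ≥ 0, and let u ∈ E with u ≠ 0 satisfy ‖T u − (λ : ℂ) • u‖ ≤ ε·‖u‖. Then there exists μ ∈ ℝ such that μ is an eigenvalue of T and |λ − μ| ≤ ε. -/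
/-- A self-adjoint operator on a nontrivial finite-dimensional complex inner product space
has a true eigenvalue within `ε` of any `ε`-approximate eigenvalue. -/
theorem approximate_eigenvalue_close_to_spectrum
    {E : Type*} [NormedAddCommGroup E] [InnerProductSpace ℂ E]
    [FiniteDimensional ℂ E] [Nontrivial E]
    (T : E →ₗ[ℂ] E) (hT : LinearMap.IsSymmetric T)
    (lam ε : ℝ) (hε : 0 ≤ ε) (u : E) (hu : u ≠ 0)
    (happrox : ‖T u - (lam : ℂ) • u‖ ≤ ε * ‖u‖) :
    ∃ μ : ℝ, Module.End.HasEigenvalue (T : Module.End ℂ E) (μ : ℂ) ∧ |lam - μ| ≤ ε := by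
  by_contra hcon
  push_neg at hcon
  have hn : Module.finrank ℂ E = Module.finrank ℂ E := rfl
  set b := hT.eigenvectorBasis hn with hb
  set μ := hT.eigenvalues hn with hμ
  have heig : ∀ i, ε < |lam - μ i| := fun i =>
    hcon (μ i) (hT.hasEigenvalue_eigenvalues hn i)
  set c : Fin (Module.finrank ℂ E) → ℂ := fun i => b.repr u i with hc
  -- coefficients of T u - λ u
  have hrepr : ∀ i, b.repr (T u - (lam : ℂ) • u) i = ((μ i : ℂ) - lam) * c i := by
    intro i
    rw [map_sub, map_smul]
    simp only [PiLp.sub_apply, PiLp.smul_apply, smul_eq_mul]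
    have h1 : b.repr (T u) i = (μ i : ℂ) * c i := by
      rw [OrthonormalBasis.repr_apply_apply, ← hT (b i) u,
        show T (b i) = (μ i : ℂ) • b i from hT.apply_eigenvectorBasis hn i,
        inner_smul_left, Complex.conj_ofReal]
      simp [hc, OrthonormalBasis.repr_apply_apply]
    rw [h1]
    ring
  -- norms squared via the orthonormal basis
  have hnorm_sq : ∀ v : E, ‖v‖ ^ 2 = ∑ i, ‖b.repr v i‖ ^ 2 := by
    intro v
    rw [← b.repr.norm_map v, EuclideanSpace.norm_eq]
    rw [Real.sq_sqrt (by positivity)]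
  have hu' : ∃ i, c i ≠ 0 := by
    by_contra h
    push_neg at h
    apply hu
    have : b.repr u = 0 := by
      ext i; exact h i
    simpa using b.repr.map_eq_zero_iff.mp this
  obtain ⟨i₀, hi₀⟩ := hu'
  have key : (ε * ‖u‖) ^ 2 < ‖T u - (lam : ℂ) • u‖ ^ 2 := by
    rw [mul_pow, hnorm_sq u, hnorm_sq, Finset.mul_sum]
    refine Finset.sum_lt_sum ?_ ⟨i₀, Finset.mem_univ i₀, ?_⟩
    · intro i _
      rw [hrepr i, norm_mul, mul_pow]
      apply mul_le_mul_of_nonneg_right _ (by positivity)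
      have := (heig i).le
      have h2 : ‖((μ i : ℂ) - lam)‖ = |μ i - lam| := by
        rw [← Complex.ofReal_sub, Complex.norm_real, Real.norm_eq_abs]
      rw [h2]
      rw [abs_sub_comm] at this
      nlinarith [abs_nonneg (μ i - lam), hε]
    · rw [hrepr i₀, norm_mul, mul_pow]
      apply mul_lt_mul_of_pos_right _ (pow_pos (norm_pos_iff.mpr hi₀) 2)
      have := heig i₀
      have h2 : ‖((μ i₀ : ℂ) - lam)‖ = |μ i₀ - lam| := by
        rw [← Complex.ofReal_sub, Complex.norm_real, Real.norm_eq_abs]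
      rw [h2]
      rw [abs_sub_comm] at this
      nlinarith [abs_nonneg (μ i₀ - lam), hε]
  have hlt : ε * ‖u‖ < ‖T u - (lam : ℂ) • u‖ := by
    have h1 : 0 ≤ ε * ‖u‖ := by positivity
    nlinarith [norm_nonneg (T u - (lam : ℂ) • u)]
  exact absurd happrox (not_le.mpr hlt)
end

section
/- Let E be a finite-dimensional complex inner product space, let T : E →ₗ[ℂ] E be a symmetric linear map, let λ ∈ ℝ and ε ≥ 0, and let u, v ∈ E be unit vectors with ⟪u, v⟫ = 0, ‖T u − (λ : ℂ) • u‖ ≤ ε and ‖T v − (λ : ℂ) • v‖ ≤ ε. Then the subspace ⨆_{μ ∈ ℝ, |μ − λ| ≤ √2·ε} eigenspace(T, μ) (the span of all eigenspaces of T for eigenvalues within √2·ε of λ) has dimension at least 2. -/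
/-!
Suppose the span `F` of the eigenspaces with eigenvalue within `√2 ε` of `λ` had dimension at
most one. Then the plane spanned by `u` and `v` contains a nonzero `w ⊥ F`. Expanding `w` in an
orthonormal eigenbasis, only eigenvalues `μ` with `|μ - λ| > √2 ε` occur, so
`‖T w - λ w‖ > √2 ε ‖w‖`. On the other hand, writing `w = a u + b v`, the triangle and
Cauchy–Schwarz inequalities give `‖T w - λ w‖ ≤ (|a| + |b|) ε ≤ √2 ε ‖w‖`. The same argument
works for `k` orthonormal approximate eigenvectors with `√k` in place of `√2`.
-/

open Module Submodule

section

variable {𝕜 E : Type*} [RCLike 𝕜] [NormedAddCommGroup E] [InnerProductSpace 𝕜 E]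

theorem Submodule.exists_mem_orthogonal_ne_zero_of_finrank_lt [FiniteDimensional 𝕜 E]
    {K W : Submodule 𝕜 E} (h : finrank 𝕜 K < finrank 𝕜 W) : ∃ w ∈ W, w ∈ Kᗮ ∧ w ≠ 0 := by
  obtain ⟨w, hw, hw0⟩ := exists_mem_ne_zero_of_ne_bot <|
    LinearMap.ker_ne_bot_of_finrank_lt
      (f := K.orthogonalProjectionOnto.toLinearMap ∘ₗ W.subtype) h
  refine ⟨w, w.2, ?_, by simpa using hw0⟩
  simpa using hw

theorem Orthonormal.norm_sum_smul {ι : Type*} [Fintype ι] {v : ι → E} (hv : Orthonormal 𝕜 v)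
    (a : ι → 𝕜) : ‖∑ i, a i • v i‖ = √(∑ i, ‖a i‖ ^ 2) := by
  rw [eq_comm, Real.sqrt_eq_iff_eq_sq (by positivity) (norm_nonneg _), @norm_sq_eq_re_inner 𝕜,
    hv.inner_sum, map_sum]
  simp only [RCLike.conj_mul, ← RCLike.ofReal_pow, RCLike.ofReal_re]

theorem norm_apply_sub_smul_le_of_mem_span_orthonormal {ι : Type*} [Fintype ι]
    {T : E →ₗ[𝕜] E} {c : 𝕜} {ε : ℝ} (hε : 0 ≤ ε) {v : ι → E} (hv : Orthonormal 𝕜 v)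
    (hTv : ∀ i, ‖T (v i) - c • v i‖ ≤ ε) {w : E} (hw : w ∈ span 𝕜 (Set.range v)) :
    ‖T w - c • w‖ ≤ √(Fintype.card ι) * ε * ‖w‖ := by
  obtain ⟨a, rfl⟩ := (mem_span_range_iff_exists_fun 𝕜).mp hw
  have hsum : T (∑ i, a i • v i) - c • ∑ i, a i • v i = ∑ i, a i • (T (v i) - c • v i) := by
    simp only [map_sum, map_smul, Finset.smul_sum, smul_sub, smul_comm c, Finset.sum_sub_distrib]
  have hcs : ∑ i, ‖a i‖ ≤ √(Fintype.card ι) * √(∑ i, ‖a i‖ ^ 2) := by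
    rw [← Real.sqrt_mul (by positivity)]
    exact Real.le_sqrt_of_sq_le <| by
      simpa using sq_sum_le_card_mul_sum_sq (s := Finset.univ) (f := fun i => ‖a i‖)
  calc ‖T (∑ i, a i • v i) - c • ∑ i, a i • v i‖
      ≤ ∑ i, ‖a i‖ * ε := by
        rw [hsum]
        refine (norm_sum_le _ _).trans (Finset.sum_le_sum fun i _ => ?_)
        rw [norm_smul]
        exact mul_le_mul_of_nonneg_left (hTv i) (norm_nonneg _)
    _ ≤ √(Fintype.card ι) * ε * ‖∑ i, a i • v i‖ := by
        rw [← Finset.sum_mul, hv.norm_sum_smul]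
        nlinarith

theorem LinearMap.IsSymmetric.mul_norm_lt_norm_apply_sub_smul [FiniteDimensional 𝕜 E]
    {T : E →ₗ[𝕜] E} (hT : T.IsSymmetric) {lam r : ℝ} {w : E}
    (hw : w ∈ (⨆ μ : {μ : ℝ // |μ - lam| ≤ r}, End.eigenspace T (μ : 𝕜))ᗮ) (hw0 : w ≠ 0) :
    r * ‖w‖ < ‖T w - (lam : 𝕜) • w‖ := by
  rcases lt_or_ge r 0 with hr | hr
  · exact (mul_neg_of_neg_of_pos hr (norm_pos_iff.2 hw0)).trans_le (norm_nonneg _)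
  set b := hT.eigenvectorBasis rfl
  set μ := hT.eigenvalues rfl
  have hcoord : ∀ i,
      inner 𝕜 (b i) (T w - (lam : 𝕜) • w) = (μ i - lam : ℝ) * inner 𝕜 (b i) w := by
    intro i
    rw [inner_sub_right, inner_smul_right, ← hT, hT.apply_eigenvectorBasis, inner_smul_left,
      RCLike.conj_ofReal]
    push_cast; ring
  have hvanish : ∀ i, |μ i - lam| ≤ r → inner 𝕜 (b i) w = 0 := fun i hi =>
    inner_right_of_mem_orthogonal
      (le_iSup (fun μ : {μ : ℝ // |μ - lam| ≤ r} => End.eigenspace T (μ : 𝕜)) ⟨μ i, hi⟩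
        (hT.hasEigenvector_eigenvectorBasis rfl i).1) hw
  obtain ⟨j, hj⟩ : ∃ j, inner 𝕜 (b j) w ≠ 0 := by
    by_contra! h
    exact hw0 (b.repr.injective (by ext i; simp [b.repr_apply_apply, h]))
  have hsq : (r * ‖w‖) ^ 2 < ‖T w - (lam : 𝕜) • w‖ ^ 2 := by
    rw [mul_pow, ← b.sum_sq_norm_inner_right, ← b.sum_sq_norm_inner_right, Finset.mul_sum]
    have hgap : ∀ i, inner 𝕜 (b i) w ≠ 0 → r < |μ i - lam| := fun i hi =>
      lt_of_not_ge fun h => hi (hvanish i h)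
    refine Finset.sum_lt_sum (fun i _ => ?_) ⟨j, Finset.mem_univ _, ?_⟩
    · rw [hcoord, norm_mul, RCLike.norm_ofReal, mul_pow]
      by_cases hi : inner 𝕜 (b i) w = 0
      · simp [hi]
      · gcongr; exact (hgap i hi).le
    · rw [hcoord, norm_mul, RCLike.norm_ofReal, mul_pow]
      have := hgap j hj
      gcongr
  exact lt_of_pow_lt_pow_left₀ 2 (norm_nonneg _) hsq

theorem LinearMap.IsSymmetric.card_le_finrank_iSup_eigenspace [FiniteDimensional 𝕜 E]
    {T : E →ₗ[𝕜] E} (hT : T.IsSymmetric) {lam ε : ℝ} (hε : 0 ≤ ε) {ι : Type*} [Fintype ι]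
    {v : ι → E} (hv : Orthonormal 𝕜 v) (hTv : ∀ i, ‖T (v i) - (lam : 𝕜) • v i‖ ≤ ε) :
    Fintype.card ι ≤ finrank 𝕜
      ↥(⨆ μ : {μ : ℝ // |μ - lam| ≤ √(Fintype.card ι) * ε}, End.eigenspace T (μ : 𝕜)) := by
  by_contra! h
  obtain ⟨w, hwv, hwF, hw0⟩ := exists_mem_orthogonal_ne_zero_of_finrank_lt
    (h.trans_eq (finrank_span_eq_card hv.linearIndependent).symm)
  exact (hT.mul_norm_lt_norm_apply_sub_smul hwF hw0).not_ge
    (norm_apply_sub_smul_le_of_mem_span_orthonormal hε hv hTv hwv)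

end

/-- Two orthogonal unit `ε`-approximate eigenvectors of a self-adjoint operator force the
span of the eigenspaces with eigenvalue within `√2·ε` of `λ` to have dimension at least 2. -/
theorem two_orthogonal_approximate_eigenvectors
    {E : Type*} [NormedAddCommGroup E] [InnerProductSpace ℂ E] [FiniteDimensional ℂ E]
    (T : E →ₗ[ℂ] E) (hT : LinearMap.IsSymmetric T)
    (lam ε : ℝ) (hε : 0 ≤ ε) (u v : E)
    (hu : ‖u‖ = 1) (hv : ‖v‖ = 1) (huv : (inner ℂ u v : ℂ) = 0)
    (hTu : ‖T u - (lam : ℂ) • u‖ ≤ ε) (hTv : ‖T v - (lam : ℂ) • v‖ ≤ ε) :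
    2 ≤ Module.finrank ℂ
      ↥(⨆ μ : {μ : ℝ // |μ - lam| ≤ Real.sqrt 2 * ε},
          Module.End.eigenspace (T : Module.End ℂ E) ((μ : ℝ) : ℂ)) := by
  have hortho : Orthonormal ℂ ![u, v] := by
    rw [orthonormal_iff_ite]
    intro i j
    fin_cases i <;> fin_cases j <;>
      simp [inner_self_eq_norm_sq_to_K, hu, hv, huv, inner_eq_zero_symm.mp huv]
  have h := hT.card_le_finrank_iSup_eigenspace (ι := Fin 2) hε hortho
    (Fin.forall_fin_two.2 ⟨hTu, hTv⟩)
  rwa [Fintype.card_fin, Nat.cast_ofNat] at h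
end

section
/- Let d ≥ 1, C ≥ 0, ρ > 0, and let c : (Fin d →₀ ℕ) → ℂ satisfy |c ν| ≤ C·ρ^{|ν|}·(|ν|)! for every multi-index ν. Then for every a with 0 < a < 1 there exists K(a,d) ≥ 0, depending only on a and d, such that for every z ∈ ℂ^d with |z i| ≤ a/(ρ·d) for all i, the family (|c ν|/ν!)·∏_i |z i|^{ν i}, indexed by multi-indices ν, is summable with sum at most C·K(a,d). -/
/-!
Since `|ν|! ≤ d^|ν| ν!` (the multinomial coefficient of `ν` is one term of the expansion
of `(1 + ⋯ + 1)^|ν| = d^|ν|`), the growth bound on `c` together with `|z i| ≤ a/(ρd)` gives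
`(|c ν|/ν!) ∏ |z i|^(ν i) ≤ C a^|ν| = C ∏ a^(ν i)`. The majorant is a product of `d`
geometric series, with sum `C (1 - a)⁻ᵈ`.
-/

/-- The factorial `ν! = ∏ᵢ (νᵢ)!` of a multi-index. -/
def mfactorial {d : ℕ} (ν : Fin d →₀ ℕ) : ℕ := ∏ i, Nat.factorial (ν i)

open Finset Nat

theorem Nat.multinomial_univ_le_card_pow {ι : Type*} [Fintype ι] (f : ι → ℕ) :
    Nat.multinomial univ f ≤ Fintype.card ι ^ ∑ i, f i := by
  classical
  have hf : f ∈ piAntidiag univ (∑ i, f i) := mem_piAntidiag.mpr ⟨rfl, fun i _ => mem_univ i⟩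
  calc Nat.multinomial univ f
      ≤ ∑ k ∈ piAntidiag univ (∑ i, f i), Nat.multinomial univ k :=
        single_le_sum (fun _ _ => Nat.zero_le _) hf
    _ = Fintype.card ι ^ ∑ i, f i := by
        simpa using (sum_pow_eq_sum_piAntidiag univ (fun _ => (1 : ℕ)) (∑ i, f i)).symm

theorem Nat.factorial_sum_le_card_pow_mul_prod_factorial {ι : Type*} [Fintype ι]
    (f : ι → ℕ) : (∑ i, f i)! ≤ Fintype.card ι ^ (∑ i, f i) * ∏ i, (f i)! := by
  rw [← Nat.multinomial_spec, mul_comm]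
  exact Nat.mul_le_mul_right _ (Nat.multinomial_univ_le_card_pow f)

theorem hasSum_fin_pi_prod {β : Type*} {d : ℕ} {f : Fin d → β → ℝ} {s : Fin d → ℝ}
    (hf : ∀ i b, 0 ≤ f i b) (hs : ∀ i, HasSum (f i) (s i)) :
    HasSum (fun g : Fin d → β => ∏ i, f i (g i)) (∏ i, s i) := by
  induction d with
  | zero => simp
  | succ d ih =>
    have htail := ih (fun i => hf i.succ) (fun i => hs i.succ)
    have hhead_nonneg : 0 ≤ f 0 := hf 0
    have htail_nonneg : 0 ≤ fun g : Fin d → β => ∏ i, f i.succ (g i) :=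
      fun g => prod_nonneg fun i _ => hf i.succ (g i)
    have hsummable :=
      Summable.mul_of_nonneg (hs 0).summable htail.summable hhead_nonneg htail_nonneg
    have hsplit := (hs 0).mul htail hsummable
    have hcons : (fun g : Fin (d + 1) → β => ∏ i, f i (g i)) ∘ Fin.consEquiv (fun _ => β) =
        fun x => f 0 x.1 * ∏ i, f i.succ (x.2 i) := by
      funext x
      simp [Fin.consEquiv, Fin.prod_univ_succ]
    rw [Fin.prod_univ_succ, ← (Fin.consEquiv fun _ => β).hasSum_iff, hcons]
    exact hsplit

theorem hasSum_prod_pow_finsupp {d : ℕ} {a : ℝ} (ha : 0 ≤ a) (ha1 : a < 1) :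
    HasSum (fun ν : Fin d →₀ ℕ => ∏ i, a ^ ν i) ((1 - a)⁻¹ ^ d) := by
  have hpi : HasSum (fun g : Fin d → ℕ => ∏ i, a ^ g i) (∏ _i : Fin d, (1 - a)⁻¹) :=
    hasSum_fin_pi_prod (fun _ n => pow_nonneg ha n) fun _ => hasSum_geometric_of_lt_one ha ha1
  rw [prod_const, Finset.card_fin] at hpi
  exact (Finsupp.equivFunOnFinite.hasSum_iff (f := fun g : Fin d → ℕ => ∏ i, a ^ g i)).mpr
    hpi

theorem factorial_sum_le_pow_mul_mfactorial {d : ℕ} (ν : Fin d →₀ ℕ) :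
    ((∑ i, ν i)! : ℝ) ≤ (d : ℝ) ^ (∑ i, ν i) * mfactorial ν := by
  exact_mod_cast by
    simpa [mfactorial] using Nat.factorial_sum_le_card_pow_mul_prod_factorial ν

theorem norm_div_mfactorial_mul_prod_le {d : ℕ} {C ρ a : ℝ} (hC : 0 ≤ C) (hρ : 0 ≤ ρ)
    (ha : 0 ≤ a) {ν : Fin d →₀ ℕ} {c : ℂ} {z : Fin d → ℂ}
    (hc : ‖c‖ ≤ C * ρ ^ (∑ i, ν i) * (∑ i, ν i)!) (hz : ∀ i, ‖z i‖ ≤ a / (ρ * d)) :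
    ‖c‖ / mfactorial ν * ∏ i, ‖z i‖ ^ ν i ≤ C * ∏ i, a ^ ν i := by
  set n := ∑ i, ν i
  set r := a / (ρ * d)
  have hprod : ∏ i, ‖z i‖ ^ ν i ≤ r ^ n := by
    rw [← prod_pow_eq_pow_sum]
    exact prod_le_prod (fun i _ => by positivity) fun i _ =>
      pow_le_pow_left₀ (norm_nonneg _) (hz i) _
  have hradius : ρ * d * r ≤ a := by
    rcases eq_or_ne (ρ * d) 0 with h | h
    · simp [h, ha]
    · rw [mul_div_cancel₀ _ h]
  have hmf : (0 : ℝ) < mfactorial ν := by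
    exact_mod_cast prod_pos fun i _ => Nat.factorial_pos (ν i)
  rw [div_mul_eq_mul_div, div_le_iff₀ hmf, prod_pow_eq_pow_sum]
  calc ‖c‖ * ∏ i, ‖z i‖ ^ ν i
      ≤ C * ρ ^ n * n ! * r ^ n := mul_le_mul hc hprod (by positivity) (by positivity)
    _ ≤ C * ρ ^ n * ((d : ℝ) ^ n * mfactorial ν) * r ^ n := by
        gcongr; exact factorial_sum_le_pow_mul_mfactorial ν
    _ = C * (ρ * d * r) ^ n * mfactorial ν := by ring
    _ ≤ C * a ^ n * mfactorial ν := by gcongr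

theorem taylor_series_summable_on_polydisk_general
    (d : ℕ) : ∀ a : ℝ, 0 < a → a < 1 →
    ∃ K : ℝ, 0 ≤ K ∧
      ∀ C : ℝ, 0 ≤ C → ∀ ρ : ℝ, 0 < ρ →
      ∀ c : (Fin d →₀ ℕ) → ℂ,
        (∀ ν : Fin d →₀ ℕ, ‖c ν‖ ≤
          C * ρ ^ (∑ i, ν i) * (Nat.factorial (∑ i, ν i))) →
      ∀ z : Fin d → ℂ, (∀ i, ‖z i‖ ≤ a / (ρ * d)) →
        Summable (fun ν : Fin d →₀ ℕ =>
          (‖c ν‖ / (mfactorial ν : ℝ)) * ∏ i, ‖z i‖ ^ (ν i)) ∧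
        (∑' ν : Fin d →₀ ℕ,
          (‖c ν‖ / (mfactorial ν : ℝ)) * ∏ i, ‖z i‖ ^ (ν i))
          ≤ C * K := by
  intro a ha ha1
  refine ⟨(1 - a)⁻¹ ^ d, pow_nonneg (inv_nonneg.mpr (sub_nonneg.mpr ha1.le)) d, ?_⟩
  intro C hC ρ hρ c hc z hz
  have hmajorant := (hasSum_prod_pow_finsupp (d := d) ha.le ha1).mul_left C
  have hbound ν := norm_div_mfactorial_mul_prod_le hC hρ.le ha.le (hc ν) hz
  have hsummable := hmajorant.summable.of_nonneg_of_le (fun ν => by positivity) hbound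
  refine ⟨hsummable, ?_⟩
  calc _ ≤ ∑' ν : Fin d →₀ ℕ, C * ∏ i, a ^ ν i :=
        hsummable.tsum_le_tsum hbound hmajorant.summable
    _ = C * (1 - a)⁻¹ ^ d := hmajorant.tsum_eq

/-- Taylor coefficients with controlled growth give an absolutely convergent Taylor series
on a polydisk, with a bound depending only on `a` and `d`. -/
theorem taylor_series_summable_on_polydisk
    (d : ℕ) (hd : 1 ≤ d) : ∀ a : ℝ, 0 < a → a < 1 →
    ∃ K : ℝ, 0 ≤ K ∧
      ∀ C : ℝ, 0 ≤ C → ∀ ρ : ℝ, 0 < ρ →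
      ∀ c : (Fin d →₀ ℕ) → ℂ,
        (∀ ν : Fin d →₀ ℕ, ‖c ν‖ ≤
          C * ρ ^ (∑ i, ν i) * (Nat.factorial (∑ i, ν i))) →
      ∀ z : Fin d → ℂ, (∀ i, ‖z i‖ ≤ a / (ρ * d)) →
        Summable (fun ν : Fin d →₀ ℕ =>
          (‖c ν‖ / (mfactorial ν : ℝ)) * ∏ i, ‖z i‖ ^ (ν i)) ∧
        (∑' ν : Fin d →₀ ℕ,
          (‖c ν‖ / (mfactorial ν : ℝ)) * ∏ i, ‖z i‖ ^ (ν i))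
          ≤ C * K :=
  taylor_series_summable_on_polydisk_general d
end
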